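/- arXiv:2003.01967 — 5 statements merged into one kernel-verified Lean document; each statement's English description precedes it below -/
import Mathlib

section
/- Let V be a finite-dimensional (complex) vector space, Ω ⊆ ℝ open and bounded, f : Ω → V continuous, p ≥ 1, and set Ω₀ := {t ∈ Ω : f(t) ≠ 0}. Assume that the restriction f|_{Ω₀} is locally absolutely continuous on Ω₀ and that its pointwise derivative satisfies f|_{Ω₀}′ ∈ L^p(Ω₀, V). Then the distributional derivative of f on Ω is (represented by) a measurable function f′ ∈ L^p(Ω, V), and ‖f′‖_{L^p(Ω,V)} = ‖f|_{Ω₀}′‖_{L^p(Ω₀,V)} (the L^p-norms computed with respect to a fixed basis of V). -/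
open MeasureTheory Set
open scoped ENNReal NNReal

noncomputable section

/-- The Lipschitz seminorm (best Lipschitz constant) of `f` on `s`. -/
def lipConstOn {E : Type*} [NormedAddCommGroup E] (f : ℝ → E) (s : Set ℝ) : ℝ :=
  sInf {C : ℝ | 0 ≤ C ∧ ∀ x ∈ s, ∀ y ∈ s, ‖f x - f y‖ ≤ C * |x - y|}

/-- `f` is of class `C^{k,1}` on `s`: it is `C^k` and the `k`-th derivative is Lipschitz. -/
def CkLipOn {E : Type*} [NormedAddCommGroup E] [NormedSpace ℝ E] (k : ℕ) (f : ℝ → E)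
    (s : Set ℝ) : Prop :=
  ContDiffOn ℝ k f s ∧ ∃ C : ℝ, 0 ≤ C ∧ ∀ x ∈ s, ∀ y ∈ s,
    ‖iteratedDerivWithin k f s x - iteratedDerivWithin k f s y‖ ≤ C * |x - y|

/-- The `C^{k,1}` norm of `f` on `s`:
`max_{j ≤ k} sup_s ‖f^{(j)}‖ + Lip_s (f^{(k)})`. -/
def ckLipNorm {E : Type*} [NormedAddCommGroup E] [NormedSpace ℝ E] (k : ℕ) (f : ℝ → E)
    (s : Set ℝ) : ℝ :=
  (⨆ j : Fin (k + 1), ⨆ x : s, ‖iteratedDerivWithin (j : ℕ) f s (x : ℝ)‖) +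
    lipConstOn (iteratedDerivWithin k f s) s

/-- Absolute continuity of `f` on a set `s ⊆ ℝ`. -/
def AbsolutelyContinuousOn {E : Type*} [NormedAddCommGroup E] (f : ℝ → E) (s : Set ℝ) : Prop :=
  ∀ ε > (0 : ℝ), ∃ δ > (0 : ℝ), ∀ (m : ℕ) (a b : Fin m → ℝ),
    (∀ i, a i ≤ b i) → (∀ i, Set.Icc (a i) (b i) ⊆ s) →
    (Pairwise fun i j => Set.Ioo (a i) (b i) ∩ Set.Ioo (a j) (b j) = ∅) →
    (∑ i, (b i - a i)) < δ → (∑ i, ‖f (b i) - f (a i)‖) < ε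

/-- The polynomial map `V = ℂ^N → ℂ^n` associated with a family of polynomials. -/
def polyMap {N n : ℕ} (σ : Fin n → MvPolynomial (Fin N) ℂ) (v : Fin N → ℂ) : Fin n → ℂ :=
  fun j => MvPolynomial.eval v (σ j)

/-- `σ` is a system of basic invariants for the representation `ρ` of `G` on `ℂ^N`:
each `σ j` is `G`-invariant, and every `G`-invariant polynomial lies in the subalgebra
generated by the `σ j`. -/
def IsBasicInvariantSystem {G : Type*} [Group G] {N n : ℕ}
    (ρ : Representation ℂ G (Fin N → ℂ)) (σ : Fin n → MvPolynomial (Fin N) ℂ) : Prop :=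
  (∀ j g v, MvPolynomial.eval (ρ g v) (σ j) = MvPolynomial.eval v (σ j)) ∧
  (∀ q : MvPolynomial (Fin N) ℂ,
    (∀ g v, MvPolynomial.eval (ρ g v) q = MvPolynomial.eval v q) →
      q ∈ Algebra.adjoin ℂ (Set.range σ))

/-!
Take `g := 𝟙_{Ω₀} · f'`; its `L^p` properties are those of `f'` on `Ω₀`. For a test function `φ`,
`h := φ • f` is continuous on `ℝ` and vanishes off `Ω₀`. Every connected component of `Ω₀` is an
interval `(a, b)` with `a, b ∉ Ω₀`, so `h a = h b = 0`. On compact subintervals `h` is absolutely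
continuous with `h' = φ' • f + φ • f'` a.e., so the fundamental theorem of calculus (vector-valued,
by testing against linear functionals) holds there, and by continuity it extends to `[a, b]`.
Hence `∫ h'` vanishes on each of the countably many components, i.e. on `Ω₀`, which is the
distributional identity because `f = 0` on `Ω \ Ω₀`.
-/

theorem AbsolutelyContinuousOn.absolutelyContinuousOnInterval {E : Type*}
    [NormedAddCommGroup E] {f : ℝ → E} {a b : ℝ} (hf : AbsolutelyContinuousOn f (uIcc a b)) :
    AbsolutelyContinuousOnInterval f a b := by
  rw [absolutelyContinuousOnInterval_iff]
  intro ε hε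
  obtain ⟨δ, hδ, hfδ⟩ := hf ε hε
  refine ⟨δ, hδ, fun ⟨n, I⟩ ⟨hI, hdisj⟩ hlen => ?_⟩
  have hmem (i : Fin n) := hI i (Finset.mem_range.2 i.2)
  have hdist (x y : ℝ) : ‖f (max x y) - f (min x y)‖ = dist (f x) (f y) := by
    rcases le_total x y with h | h <;> simp [h, dist_eq_norm, norm_sub_rev]
  have hlen' (x y : ℝ) : max x y - min x y = dist x y := by
    rw [max_sub_min_eq_abs', Real.dist_eq]
  rw [← Fin.sum_univ_eq_sum_range (fun i => dist (I i).1 (I i).2)] at hlen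
  rw [← Fin.sum_univ_eq_sum_range (fun i => dist (f (I i).1) (f (I i).2))]
  simp only [← hdist, ← hlen'] at hlen ⊢
  refine hfδ n (fun i => min (I i).1 (I i).2) (fun i => max (I i).1 (I i).2)
    (fun i => min_le_max) (fun i => uIcc_subset_uIcc (hmem i).1 (hmem i).2) ?_ hlen
  intro i j hij
  have := hdisj (Finset.mem_range.2 i.2) (Finset.mem_range.2 j.2) (Fin.val_injective.ne hij)
  exact disjoint_iff_inter_eq_empty.1 (this.mono Ioo_subset_Ioc_self Ioo_subset_Ioc_self)

theorem LipschitzWith.comp_absolutelyContinuousOnInterval {X Y : Type*} [PseudoMetricSpace X]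
    [PseudoMetricSpace Y] {g : X → Y} {K : ℝ≥0} (hg : LipschitzWith K g) {f : ℝ → X} {a b : ℝ}
    (hf : AbsolutelyContinuousOnInterval f a b) :
    AbsolutelyContinuousOnInterval (g ∘ f) a b := by
  refine squeeze_zero (fun _ => Finset.sum_nonneg fun _ _ => dist_nonneg) (fun E => ?_)
    (by simpa using Filter.Tendsto.const_mul (K : ℝ) hf)
  rw [Finset.mul_sum]
  exact Finset.sum_le_sum fun i _ => hg.dist_le_mul _ _

section
variable {F : Type*} [NormedAddCommGroup F] [NormedSpace ℝ F] [FiniteDimensional ℝ F]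
  {f : ℝ → F} {a b : ℝ}

theorem AbsolutelyContinuousOnInterval.integral_deriv_eq_sub_of_intervalIntegrable
    (hf : AbsolutelyContinuousOnInterval f a b) (hf' : IntervalIntegrable (deriv f) volume a b) :
    ∫ x in a..b, deriv f x = f b - f a := by
  have : CompleteSpace F := FiniteDimensional.complete ℝ F
  refine (SeparatingDual.eq_iff_forall_dual_eq (R := ℝ)).2 fun ℓ => ?_
  have hℓf : AbsolutelyContinuousOnInterval (ℓ ∘ f) a b :=
    ℓ.lipschitz.comp_absolutelyContinuousOnInterval hf
  rw [← ℓ.intervalIntegral_comp_comm hf', map_sub, ← Function.comp_apply (f := ℓ),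
    ← Function.comp_apply (f := ℓ) (x := a), ← hℓf.integral_deriv_eq_sub]
  refine intervalIntegral.integral_congr_ae ?_
  filter_upwards [hf.boundedVariationOn.ae_differentiableAt_of_mem_uIcc] with x hx hxab
  exact (ℓ.hasFDerivAt.comp_hasDerivAt x (hx (uIoc_subset_uIcc hxab)).hasDerivAt).deriv.symm

theorem AbsolutelyContinuousOnInterval.integral_deriv_smul_eq_sub {φ : ℝ → ℝ}
    (hφ : AbsolutelyContinuousOnInterval φ a b) (hf : AbsolutelyContinuousOnInterval f a b)
    (hf' : IntervalIntegrable (deriv f) volume a b) :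
    ∫ x in a..b, deriv φ x • f x + φ x • deriv f x = φ b • f b - φ a • f a := by
  have hderiv : ∀ᵐ x, x ∈ uIoc a b →
      deriv (fun x => φ x • f x) x = deriv φ x • f x + φ x • deriv f x := by
    filter_upwards [hφ.ae_differentiableAt, hf.boundedVariationOn.ae_differentiableAt_of_mem_uIcc]
      with x hφx hfx hx
    have hx := uIoc_subset_uIcc hx
    exact ((hφx hx).hasDerivAt.smul (hfx hx).hasDerivAt).deriv.trans (add_comm _ _)
  have hint : IntervalIntegrable (fun x => deriv φ x • f x + φ x • deriv f x) volume a b :=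
    (hφ.intervalIntegrable_deriv.smul_continuousOn hf.continuousOn).add
      (hf'.continuousOn_smul hφ.continuousOn)
  rw [← intervalIntegral.integral_congr_ae hderiv]
  exact (hφ.fun_smul hf).integral_deriv_eq_sub_of_intervalIntegrable
    (hint.congr_ae (((ae_restrict_iff' measurableSet_uIoc).2 hderiv).mono fun _ => Eq.symm))
end

theorem IsOpen.exists_connectedComponentIn_eq_Ioo {U : Set ℝ} (hU : IsOpen U)
    (hUb : Bornology.IsBounded U) {x : ℝ} (hx : x ∈ U) :
    ∃ a b, connectedComponentIn U x = Ioo a b ∧ a ∉ U ∧ b ∉ U := by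
  set C := connectedComponentIn U x
  have hCU : C ⊆ U := connectedComponentIn_subset U x
  have hCo : IsOpen C := hU.connectedComponentIn
  have hCne : C.Nonempty := ⟨x, mem_connectedComponentIn hx⟩
  have hCb : Bornology.IsBounded C := hUb.subset hCU
  -- `insert y C` is still preconnected, so it lies in the component `C`.
  have hclosure : ∀ y ∈ closure C, y ∉ C → y ∉ U := fun y hyC hy hyU =>
    hy <| (isPreconnected_connectedComponentIn.subset_closure (subset_insert y C)
      (insert_subset hyC subset_closure)).subset_connectedComponentIn
      (mem_insert_of_mem _ (mem_connectedComponentIn hx)) (insert_subset hyU hCU) (mem_insert y C)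
  have hinf : sInf C ∉ C := fun h => by
    obtain ⟨z, hz, hzC⟩ := Filter.Eventually.exists_lt (hCo.mem_nhds h)
    exact hz.not_ge (csInf_le hCb.bddBelow hzC)
  have hsup : sSup C ∉ C := fun h => by
    obtain ⟨z, hz, hzC⟩ := Filter.Eventually.exists_gt (hCo.mem_nhds h)
    exact hz.not_ge (le_csSup hCb.bddAbove hzC)
  refine ⟨sInf C, sSup C, Subset.antisymm (fun y hy => ⟨?_, ?_⟩) ?_,
    hclosure _ (csInf_mem_closure hCne hCb.bddBelow) hinf,
    hclosure _ (csSup_mem_closure hCne hCb.bddAbove) hsup⟩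
  · exact (csInf_le hCb.bddBelow hy).lt_of_ne (ne_of_mem_of_not_mem hy hinf).symm
  · exact (le_csSup hCb.bddAbove hy).lt_of_ne (ne_of_mem_of_not_mem hy hsup)
  · exact IsConnected.Ioo_csInf_csSup_subset ⟨hCne, isPreconnected_connectedComponentIn⟩
      hCb.bddBelow hCb.bddAbove

section
variable {E : Type*} [NormedAddCommGroup E] [NormedSpace ℝ E] {h h' : ℝ → E}

theorem intervalIntegral_eq_sub_of_forall_mem_Ioo {a b : ℝ} (hab : a ≤ b)
    (hh : ContinuousOn h (Icc a b)) (hh' : IntegrableOn h' (Ioo a b))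
    (hFTC : ∀ c ∈ Ioo a b, ∀ d ∈ Ioo a b, ∫ x in c..d, h' x = h d - h c) :
    ∫ x in a..b, h' x = h b - h a := by
  rcases hab.eq_or_lt with rfl | hab
  · simp
  have hIcc : IntegrableOn h' (uIcc a b) := by
    rw [uIcc_of_le hab.le]
    exact Iff.mpr integrableOn_Icc_iff_integrableOn_Ioo hh'
  set G : ℝ → E := fun x => (∫ t in a..x, h' t) - h x
  have hG : ContinuousOn G (Icc a b) := by
    rw [← uIcc_of_le hab.le] at hh ⊢
    exact (intervalIntegral.continuousOn_primitive_interval hIcc).sub hh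
  have hm : (a + b) / 2 ∈ Ioo a b := ⟨by linarith, by linarith⟩
  have hGconst : EqOn G (fun _ => G ((a + b) / 2)) (Ioo a b) := by
    intro x hx
    have hint (y : ℝ) (hy : y ∈ Ioo a b) : IntervalIntegrable h' volume a y :=
      hIcc.intervalIntegrable.mono_set (uIcc_subset_uIcc left_mem_uIcc
        (Icc_subset_uIcc (Ioo_subset_Icc_self hy)))
    simp only [G]
    rw [sub_eq_sub_iff_sub_eq_sub, intervalIntegral.integral_interval_sub_left (hint x hx)
      (hint _ hm), hFTC _ hm x hx]
  have hGab := hGconst.of_subset_closure hG continuousOn_const Ioo_subset_Icc_self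
    (closure_Ioo hab.ne).ge
  have h1 := (hGab (right_mem_Icc.2 hab.le)).trans (hGab (left_mem_Icc.2 hab.le)).symm
  simp only [G, intervalIntegral.integral_same, zero_sub] at h1
  rw [← sub_eq_zero, ← sub_add, h1, neg_add_cancel]
end

theorem setIntegral_eq_zero_of_intervalIntegral_eq_sub {E : Type*} [NormedAddCommGroup E]
    [NormedSpace ℝ E] {U : Set ℝ} (hU : IsOpen U) (hUb : Bornology.IsBounded U) {h h' : ℝ → E}
    (hh : Continuous h) (hzero : ∀ x ∉ U, h x = 0) (hh' : IntegrableOn h' U)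
    (hFTC : ∀ c d, uIcc c d ⊆ U → ∫ x in c..d, h' x = h d - h c) :
    ∫ x in U, h' x = 0 := by
  set 𝒞 : Set (Set ℝ) := connectedComponentIn U '' U
  have hcomp : ∀ C : 𝒞, ∫ x in (C : Set ℝ), h' x = 0 := by
    rintro ⟨_, x, hx, rfl⟩
    obtain ⟨a, b, hC, ha, hb⟩ := hU.exists_connectedComponentIn_eq_Ioo hUb hx
    have hsub : Ioo a b ⊆ U := hC ▸ connectedComponentIn_subset U x
    have hab : a < b := by
      have hxC := hC ▸ mem_connectedComponentIn hx
      exact hxC.1.trans hxC.2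
    change ∫ x in connectedComponentIn U x, h' x = 0
    rw [hC, ← integral_Ioc_eq_integral_Ioo, ← intervalIntegral.integral_of_le hab.le,
      intervalIntegral_eq_sub_of_forall_mem_Ioo hab.le hh.continuousOn (hh'.mono_set hsub)
        (fun c hc d hd => hFTC c d ((ordConnected_Ioo.uIcc_subset hc hd).trans hsub)),
      hzero a ha, hzero b hb, sub_self]
  have hopen : ∀ C ∈ 𝒞, IsOpen C := by
    rintro _ ⟨x, -, rfl⟩
    exact hU.connectedComponentIn
  have hdisj : 𝒞.PairwiseDisjoint id := by
    rintro _ ⟨x, -, rfl⟩ _ ⟨y, -, rfl⟩ hne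
    exact disjoint_left.2 fun z hzx hzy =>
      hne ((connectedComponentIn_eq hzx).trans (connectedComponentIn_eq hzy).symm)
  have : Countable 𝒞 := (hdisj.countable_of_isOpen hopen (by
    rintro _ ⟨x, hx, rfl⟩
    exact ⟨x, mem_connectedComponentIn hx⟩)).to_subtype
  have hUeq : U = ⋃ C : 𝒞, (C : Set ℝ) := by
    rw [← sUnion_eq_iUnion, sUnion_image]
    exact Subset.antisymm (fun x hx => mem_biUnion hx (mem_connectedComponentIn hx))
      (iUnion₂_subset fun x _ => connectedComponentIn_subset U x)
  rw [hUeq] at hh' ⊢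
  rw [integral_iUnion (s := fun C : 𝒞 => (C : Set ℝ)) (fun C => (hopen C C.2).measurableSet)
    (fun C D hCD => hdisj C.2 D.2 (Subtype.coe_injective.ne hCD)) hh']
  simp [hcomp]

theorem ContinuousOn.continuous_smul_of_tsupport_subset {X 𝕜 F : Type*} [TopologicalSpace X]
    [TopologicalSpace 𝕜] [TopologicalSpace F] [Zero 𝕜] [Zero F] [SMulWithZero 𝕜 F]
    [ContinuousSMul 𝕜 F] {Ω : Set X} (hΩ : IsOpen Ω) {f : X → F} (hf : ContinuousOn f Ω)
    {ψ : X → 𝕜} (hψ : Continuous ψ) (hψΩ : tsupport ψ ⊆ Ω) :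
    Continuous fun x => ψ x • f x :=
  continuous_of_tsupport fun x hx =>
    have hxΩ : x ∈ Ω := hψΩ (tsupport_smul_subset_left ψ f hx)
    hψ.continuousAt.smul (hf.continuousAt (hΩ.mem_nhds hxΩ))

theorem setIntegral_deriv_smul_eq_neg_setIntegral_smul_deriv {F : Type*} [NormedAddCommGroup F]
    [NormedSpace ℝ F] [FiniteDimensional ℝ F] {Ω U : Set ℝ} (hΩ : IsOpen Ω) (hU : IsOpen U)
    (hUb : Bornology.IsBounded U) (hUΩ : U ⊆ Ω) {f : ℝ → F} (hf : ContinuousOn f Ω)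
    (hfU : ∀ x ∈ Ω \ U, f x = 0)
    (hAC : ∀ c d, uIcc c d ⊆ U → AbsolutelyContinuousOnInterval f c d)
    (hf' : IntegrableOn (deriv f) U) {φ : ℝ → ℝ} (hφ : ContDiff ℝ 1 φ)
    (hφc : HasCompactSupport φ) (hφΩ : tsupport φ ⊆ Ω) :
    ∫ t in Ω, deriv φ t • f t = -∫ t in U, φ t • deriv f t := by
  have hφ'f : Integrable fun t => deriv φ t • f t :=
    (hf.continuous_smul_of_tsupport_subset hΩ (hφ.continuous_deriv le_rfl)
      (tsupport_deriv_subset.trans hφΩ)).integrable_of_hasCompactSupport hφc.deriv.smul_right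
  have hφf' : IntegrableOn (fun t => φ t • deriv f t) U :=
    hf'.smul_of_top_right (hφ.continuous.memLp_top_of_hasCompactSupport hφc _)
  have hzero : ∀ x ∉ U, φ x • f x = 0 := by
    intro x hxU
    by_cases hxΩ : x ∈ Ω
    · rw [hfU x ⟨hxΩ, hxU⟩, smul_zero]
    · rw [image_eq_zero_of_notMem_tsupport fun hx => hxΩ (hφΩ hx), zero_smul]
  have hFTC : ∀ c d, uIcc c d ⊆ U →
      ∫ t in c..d, deriv φ t • f t + φ t • deriv f t = φ d • f d - φ c • f c := fun c d hcd =>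
    hφ.contDiffOn.absolutelyContinuousOnInterval.integral_deriv_smul_eq_sub (hAC c d hcd)
      ((hf'.mono_set hcd).intervalIntegrable)
  have hsum := setIntegral_eq_zero_of_intervalIntegral_eq_sub hU hUb
    (hf.continuous_smul_of_tsupport_subset hΩ hφ.continuous hφΩ) hzero
    (h' := fun t => deriv φ t • f t + φ t • deriv f t) (hφ'f.integrableOn.add hφf') hFTC
  rw [integral_add hφ'f.integrableOn hφf'] at hsum
  rw [setIntegral_eq_of_subset_of_forall_sdiff_eq_zero hΩ.measurableSet hUΩ
    fun x hx => by rw [hfU x hx, smul_zero]]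
  exact eq_neg_of_add_eq_zero_left hsum

/-- **Extension lemma.**
Let `V` be a finite-dimensional complex vector space, `Ω ⊆ ℝ` open and bounded,
`f : Ω → V` continuous, `p ≥ 1`, and `Ω₀ = {t ∈ Ω : f t ≠ 0}`.  If `f` is locally
absolutely continuous on `Ω₀` and its pointwise derivative belongs to `L^p(Ω₀, V)`, then
the distributional derivative of `f` on `Ω` is (represented by) a function
`g ∈ L^p(Ω, V)` with `‖g‖_{L^p(Ω)} = ‖f|_{Ω₀}′‖_{L^p(Ω₀)}`. -/
theorem extension_lemma
    {V : Type} [NormedAddCommGroup V] [NormedSpace ℂ V] [FiniteDimensional ℂ V]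
    (Ω : Set ℝ) (hΩopen : IsOpen Ω) (hΩbdd : Bornology.IsBounded Ω)
    (f : ℝ → V) (hf : ContinuousOn f Ω)
    (p : ℝ) (hp : 1 ≤ p)
    (Ω₀ : Set ℝ) (hΩ₀ : Ω₀ = {t ∈ Ω | f t ≠ 0})
    (hAC : ∀ a b : ℝ, a ≤ b → Set.Icc a b ⊆ Ω₀ → AbsolutelyContinuousOn f (Set.Icc a b))
    (hLp : MemLp (deriv f) (ENNReal.ofReal p) (volume.restrict Ω₀)) :
    ∃ g : ℝ → V,
      MemLp g (ENNReal.ofReal p) (volume.restrict Ω) ∧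
      (∀ φ : ℝ → ℝ, ContDiff ℝ (⊤ : ℕ∞) φ → HasCompactSupport φ → tsupport φ ⊆ Ω →
        ∫ t in Ω, deriv φ t • f t = - ∫ t in Ω, φ t • g t) ∧
      eLpNorm g (ENNReal.ofReal p) (volume.restrict Ω) =
        eLpNorm (deriv f) (ENNReal.ofReal p) (volume.restrict Ω₀) := by
  have hΩ₀Ω : Ω₀ ⊆ Ω := hΩ₀ ▸ sep_subset Ω _
  have hΩ₀open : IsOpen Ω₀ := hΩ₀ ▸ hf.isOpen_inter_preimage hΩopen isClosed_singleton.isOpen_compl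
  have hΩ₀bdd : Bornology.IsBounded Ω₀ := hΩbdd.subset hΩ₀Ω
  have : IsFiniteMeasure (volume.restrict Ω₀) :=
    isFiniteMeasure_restrict.2 hΩ₀bdd.measure_lt_top.ne
  have hrestrict : (volume.restrict Ω).restrict Ω₀ = volume.restrict Ω₀ :=
    Measure.restrict_restrict_of_subset hΩ₀Ω
  refine ⟨Ω₀.indicator (deriv f), ?_, fun φ hφ hφc hφΩ => ?_, ?_⟩
  · rwa [memLp_indicator_iff_restrict hΩ₀open.measurableSet, hrestrict]
  · rw [setIntegral_deriv_smul_eq_neg_setIntegral_smul_deriv hΩopen hΩ₀open hΩ₀bdd hΩ₀Ω hf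
      (fun x hx => by_contra fun hfx => hx.2 (hΩ₀ ▸ ⟨hx.1, hfx⟩))
      (fun c d hcd => (hAC _ _ min_le_max hcd).absolutelyContinuousOnInterval)
      (hLp.integrable (ENNReal.one_le_ofReal.2 hp)) (hφ.of_le (by simp)) hφc hφΩ,
      ← indicator_smul, setIntegral_indicator hΩ₀open.measurableSet, inter_eq_right.2 hΩ₀Ω]
  · rw [eLpNorm_indicator_eq_eLpNorm_restrict hΩ₀open.measurableSet, hrestrict]
end
end

section
/- Let d ≥ 1 be an integer and I ⊆ ℝ a bounded open interval. Let f, g : I → ℂ be continuous functions with f^d = g^d. If f is absolutely continuous on I with f′ ∈ L^1(I), then g is absolutely continuous on I and ‖f′‖_{L^1(I)} = ‖g′‖_{L^1(I)}. (In particular, the L^1-norm of the derivative of a continuous selection of the multi-valued d-th root of a given continuous function is independent of the selection.) -/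
open MeasureTheory Set
open scoped ENNReal NNReal

noncomputable section

/-!
Where `f` has no zero, `g / f` is continuous with values in the finite set of `d`-th roots of
unity, so on each interval free of zeros `g = ζ f` with `‖ζ‖ = 1`. Hence the increment of `g`
over `[a, b]` is bounded by the increments of `f` over `[a, a']` and `[b', b]`, where `a'`, `b'`
are the first and last zeros of `f` in `[a, b]` (at which `‖g‖ = ‖f‖` vanishes); this transfers
absolute continuity. For the derivatives, `‖g'‖ = ‖f'‖` off the zero set of `f`, both derivatives
vanish at accumulation points of the zero set, and its isolated points are countable.
-/

open Filter Topology

lemma norm_eq_norm_of_pow_eq_pow {𝕜 : Type*} [NormedDivisionRing 𝕜] {d : ℕ} (hd : d ≠ 0)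
    {x y : 𝕜} (h : x ^ d = y ^ d) : ‖x‖ = ‖y‖ :=
  (pow_left_inj₀ (norm_nonneg x) (norm_nonneg y) hd).mp (by rw [← norm_pow, ← norm_pow, h])

lemma Set.countable_diff_derivedSet {X : Type*} [TopologicalSpace X] [HereditarilyLindelofSpace X]
    (s : Set X) : (s \ derivedSet s).Countable := by
  refine (HereditarilyLindelofSpace.isLindelof _).countable_of_isDiscrete ?_
  refine isDiscrete_iff_nhdsNE.mpr fun x hx => ?_
  have hx' : 𝓝[≠] x ⊓ 𝓟 s = ⊥ := not_neBot.mp hx.2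
  exact le_bot_iff.mp (hx' ▸ inf_le_inf_left _ (principal_mono.mpr sdiff_subset))

lemma pairwise_prod_inter_eq_empty {α ι κ : Type*} {A : ι → Set α} {B : ι → κ → Set α}
    (hA : Pairwise fun i j => A i ∩ A j = ∅) (hB : ∀ i, Pairwise fun k l => B i k ∩ B i l = ∅)
    (hBA : ∀ i k, B i k ⊆ A i) :
    Pairwise fun p q : ι × κ => B p.1 p.2 ∩ B q.1 q.2 = ∅ := by
  rintro ⟨i, k⟩ ⟨j, l⟩ hne
  by_cases hij : i = j
  · subst hij
    exact hB i fun hkl => hne (Prod.ext rfl hkl)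
  · exact subset_empty_iff.mp (hA hij ▸ inter_subset_inter (hBA i k) (hBA j l))

lemma IsPreconnected.exists_eq_mul_of_pow_eq_pow {X : Type*} [TopologicalSpace X]
    {s : Set X} (hs : IsPreconnected s) {f g : X → ℂ} {d : ℕ} (hd : d ≠ 0)
    (hf : ContinuousOn f s) (hg : ContinuousOn g s) (hfg : ∀ t ∈ s, f t ^ d = g t ^ d)
    (hf0 : ∀ t ∈ s, f t ≠ 0) : ∃ ζ : ℂ, ‖ζ‖ = 1 ∧ ∀ t ∈ s, g t = ζ * f t := by
  rcases s.eq_empty_or_nonempty with rfl | ⟨x, hx⟩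
  · exact ⟨1, norm_one, fun t ht => ht.elim⟩
  have hroots : {z : ℂ | z ^ d = 1}.Finite :=
    (Polynomial.nthRoots d (1 : ℂ)).toFinset.finite_toSet.subset fun z hz => by
      simpa [Polynomial.mem_nthRoots (Nat.pos_of_ne_zero hd)] using hz
  have hmaps : MapsTo (fun t => g t / f t) s {z : ℂ | z ^ d = 1} := fun t ht => by
    simp only [mem_ofPred_eq, div_pow, ← hfg t ht, div_self (pow_ne_zero _ (hf0 t ht))]
  have hconst : ∀ t ∈ s, g t / f t = g x / f x := fun t ht =>
    hs.constant_of_mapsTo hroots.isDiscrete (hg.div hf hf0) hmaps ht hx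
  refine ⟨g x / f x, Complex.norm_eq_one_of_pow_eq_one (hmaps hx) hd, fun t ht => ?_⟩
  rw [← hconst t ht, div_mul_cancel₀ _ (hf0 t ht)]

namespace AbsolutelyContinuousOn

variable {E F : Type*} [NormedAddCommGroup E] [NormedAddCommGroup F] {f : ℝ → E} {s : Set ℝ}

lemma exists_pos_sum_lt (hf : AbsolutelyContinuousOn f s) {ε : ℝ} (hε : 0 < ε) :
    ∃ δ > (0 : ℝ), ∀ (ι : Type) [Fintype ι] (a b : ι → ℝ), (∀ i, a i ≤ b i) →
      (∀ i, Icc (a i) (b i) ⊆ s) →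
      (Pairwise fun i j => Ioo (a i) (b i) ∩ Ioo (a j) (b j) = ∅) →
      ∑ i, (b i - a i) < δ → ∑ i, ‖f (b i) - f (a i)‖ < ε := by
  obtain ⟨δ, hδ, H⟩ := hf ε hε
  refine ⟨δ, hδ, fun ι _ a b hab hsub hdisj hsum => ?_⟩
  let e := (Fintype.equivFin ι).symm
  have := H _ (fun i => a (e i)) (fun i => b (e i)) (fun i => hab _) (fun i => hsub _)
    (fun i j hij => hdisj (e.injective.ne hij)) (by rwa [e.sum_comp (fun i => b i - a i)])
  rwa [e.sum_comp (fun i => ‖f (b i) - f (a i)‖)] at this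

lemma of_norm_sub_le (hf : AbsolutelyContinuousOn f s) {g : ℝ → F}
    (H : ∀ a b, a ≤ b → Icc a b ⊆ s → ∃ a' b', a ≤ a' ∧ a' ≤ b' ∧ b' ≤ b ∧
      ‖g b - g a‖ ≤ ‖f a' - f a‖ + ‖f b - f b'‖) :
    AbsolutelyContinuousOn g s := by
  intro ε hε
  obtain ⟨δ, hδ, Hf⟩ := hf.exists_pos_sum_lt hε
  refine ⟨δ, hδ, fun m a b hab hsub hdisj hsum => ?_⟩
  choose a' b' haa' ha'b' hb'b hg using fun i => H (a i) (b i) (hab i) (hsub i)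
  let A : Fin m × Bool → ℝ := fun p => cond p.2 (b' p.1) (a p.1)
  let B : Fin m × Bool → ℝ := fun p => cond p.2 (b p.1) (a' p.1)
  have hAB : ∀ p, a p.1 ≤ A p ∧ A p ≤ B p ∧ B p ≤ b p.1 := by
    rintro ⟨i, _ | _⟩ <;> simp only [A, B, cond] <;> refine ⟨?_, ?_, ?_⟩ <;>
      linarith [haa' i, ha'b' i, hb'b i]
  have hpieces (i : Fin m) :
      Pairwise fun k l => Ioo (A (i, k)) (B (i, k)) ∩ Ioo (A (i, l)) (B (i, l)) = ∅ := by
    intro k l hkl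
    refine eq_empty_of_forall_notMem fun x ⟨hk, hl⟩ => ?_
    cases k <;> cases l <;> simp_all [A, B] <;> linarith [ha'b' i]
  have hdisj' : Pairwise fun p q => Ioo (A p) (B p) ∩ Ioo (A q) (B q) = ∅ :=
    pairwise_prod_inter_eq_empty (B := fun i k => Ioo (A (i, k)) (B (i, k))) hdisj hpieces
      fun i k => Ioo_subset_Ioo (hAB (i, k)).1 (hAB (i, k)).2.2
  have hlen : ∑ p, (B p - A p) ≤ ∑ i, (b i - a i) := by
    simp only [Fintype.sum_prod_type, Fintype.sum_bool, A, B, cond]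
    exact Finset.sum_le_sum fun i _ => by linarith [ha'b' i]
  calc ∑ i, ‖g (b i) - g (a i)‖
      ≤ ∑ i, (‖f (a' i) - f (a i)‖ + ‖f (b i) - f (b' i)‖) := Finset.sum_le_sum fun i _ => hg i
    _ = ∑ p, ‖f (B p) - f (A p)‖ := by
      simp only [Fintype.sum_prod_type, Fintype.sum_bool, A, B, cond, add_comm]
    _ < ε := Hf _ A B (fun p => (hAB p).2.1)
      (fun p => (Icc_subset_Icc (hAB p).1 (hAB p).2.2).trans (hsub p.1)) hdisj'
      (hlen.trans_lt hsum)

end AbsolutelyContinuousOn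

section RootSelection

variable {d : ℕ} {f g : ℝ → ℂ} {s : Set ℝ}

lemma norm_sub_le_of_pow_eq_pow (hd : d ≠ 0) (hf : ContinuousOn f s) (hg : ContinuousOn g s)
    (hfg : ∀ t ∈ s, f t ^ d = g t ^ d) {a b : ℝ} (hab : a ≤ b) (hsub : Icc a b ⊆ s) :
    ∃ a' b', a ≤ a' ∧ a' ≤ b' ∧ b' ≤ b ∧ ‖g b - g a‖ ≤ ‖f a' - f a‖ + ‖f b - f b'‖ := by
  have ha : a ∈ Icc a b := left_mem_Icc.mpr hab
  have hb : b ∈ Icc a b := right_mem_Icc.mpr hab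
  set Z := Icc a b ∩ f ⁻¹' {0}
  rcases Z.eq_empty_or_nonempty with hZ | hZ
  · have hf0 : ∀ t ∈ Icc a b, f t ≠ 0 := fun t ht h0 => hZ.subset ⟨ht, h0⟩
    obtain ⟨ζ, hζ, hgζ⟩ := isPreconnected_Icc.exists_eq_mul_of_pow_eq_pow hd (hf.mono hsub)
      (hg.mono hsub) (fun t ht => hfg t (hsub ht)) hf0
    refine ⟨b, b, hab, le_rfl, le_rfl, ?_⟩
    rw [hgζ b hb, hgζ a ha, ← mul_sub, norm_mul, hζ, one_mul, sub_self, norm_zero, add_zero]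
  have hZc : IsCompact Z :=
    isCompact_Icc.of_isClosed_subset ((hf.mono hsub).preimage_isClosed_of_isClosed isClosed_Icc
      isClosed_singleton) inter_subset_left
  obtain ⟨a', ⟨⟨haa', -⟩, ha'⟩, ha'Z⟩ := hZc.exists_isLeast hZ
  obtain ⟨b', hb'Z, -⟩ := hZc.exists_isGreatest hZ
  have hnorm : ∀ t ∈ Icc a b, ‖g t‖ = ‖f t‖ := fun t ht =>
    (norm_eq_norm_of_pow_eq_pow hd (hfg t (hsub ht))).symm
  refine ⟨a', b', haa', ha'Z hb'Z, hb'Z.1.2, ?_⟩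
  calc ‖g b - g a‖ ≤ ‖g a‖ + ‖g b‖ := (norm_sub_le _ _).trans_eq (add_comm _ _)
    _ = ‖f a' - f a‖ + ‖f b - f b'‖ := by
      rw [hnorm a ha, hnorm b hb, show f a' = 0 from ha', show f b' = 0 from hb'Z.2, zero_sub,
        norm_neg, sub_zero]

lemma norm_deriv_eq_of_pow_eq_pow_of_ne_zero (hd : d ≠ 0) (hs : IsOpen s)
    (hf : ContinuousOn f s) (hg : ContinuousOn g s) (hfg : ∀ t ∈ s, f t ^ d = g t ^ d)
    {t : ℝ} (ht : t ∈ s) (h0 : f t ≠ 0) : ‖deriv g t‖ = ‖deriv f t‖ := by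
  have hU : s ∩ {x | f x ≠ 0} ∈ 𝓝 t :=
    inter_mem (hs.mem_nhds ht) ((hf.continuousAt (hs.mem_nhds ht)).eventually_ne h0)
  obtain ⟨ε, hε, hball⟩ := Metric.mem_nhds_iff.mp hU
  have hball_s : Metric.ball t ε ⊆ s := hball.trans inter_subset_left
  obtain ⟨ζ, hζ, hgζ⟩ := (convex_ball t ε).isPreconnected.exists_eq_mul_of_pow_eq_pow hd
    (hf.mono hball_s) (hg.mono hball_s) (fun x hx => hfg x (hball_s hx)) fun x hx => (hball hx).2
  have hloc : g =ᶠ[𝓝 t] fun x => ζ * f x := eventually_of_mem (Metric.ball_mem_nhds t hε) hgζ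
  rw [hloc.deriv_eq, deriv_const_mul_field, norm_mul, hζ, one_mul]

lemma ae_norm_deriv_eq_of_pow_eq_pow (hd : d ≠ 0) (hs : IsOpen s) (hf : ContinuousOn f s)
    (hg : ContinuousOn g s) (hfg : ∀ t ∈ s, f t ^ d = g t ^ d) :
    ∀ᵐ t ∂volume.restrict s, ‖deriv g t‖ = ‖deriv f t‖ := by
  set Z := s ∩ f ⁻¹' {0}
  have hiso : ∀ᵐ t, t ∉ Z \ derivedSet Z :=
    measure_eq_zero_iff_ae_notMem.mp (Z.countable_diff_derivedSet.measure_zero volume)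
  rw [ae_restrict_iff' hs.measurableSet]
  filter_upwards [hiso] with t hiso ht
  by_cases h0 : f t = 0
  · -- both `f` and `g` vanish on `Z`, which accumulates at `t`
    have hacc : ∃ᶠ x in 𝓝[≠] t, x ∈ Z :=
      accPt_iff_frequently_nhdsNE.mp (not_not.mp fun h => hiso ⟨⟨ht, h0⟩, h⟩)
    have hg0 : ∀ x ∈ Z, g x = 0 := fun x hx =>
      (pow_eq_zero_iff hd).mp (by rw [← hfg x hx.1, show f x = 0 from hx.2, zero_pow hd])
    rw [deriv_zero_of_frequently_const (hacc.mono fun x hx => hg0 x hx),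
      deriv_zero_of_frequently_const (hacc.mono fun x hx => hx.2)]
  · exact norm_deriv_eq_of_pow_eq_pow_of_ne_zero hd hs hf hg hfg ht h0

end RootSelection

theorem root_selection_independence_general
    (d : ℕ) (hd : 1 ≤ d) (α β : ℝ)
    (f g : ℝ → ℂ)
    (hf : ContinuousOn f (Set.Ioo α β)) (hg : ContinuousOn g (Set.Ioo α β))
    (hfg : ∀ t ∈ Set.Ioo α β, f t ^ d = g t ^ d)
    (hfAC : AbsolutelyContinuousOn f (Set.Ioo α β))
    (hfL1 : IntegrableOn (deriv f) (Set.Ioo α β)) :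
    AbsolutelyContinuousOn g (Set.Ioo α β) ∧
    IntegrableOn (deriv g) (Set.Ioo α β) ∧
    ∫ t in Set.Ioo α β, ‖deriv f t‖ = ∫ t in Set.Ioo α β, ‖deriv g t‖ := by
  have hd₀ : d ≠ 0 := Nat.one_le_iff_ne_zero.mp hd
  have hae := ae_norm_deriv_eq_of_pow_eq_pow hd₀ isOpen_Ioo hf hg hfg
  refine ⟨hfAC.of_norm_sub_le fun a b hab hsub => ?_, ?_, ?_⟩
  · exact norm_sub_le_of_pow_eq_pow hd₀ hf hg hfg hab hsub
  · exact Integrable.mono hfL1 (measurable_deriv g).aestronglyMeasurable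
      (hae.mono fun t h => h.le)
  · exact integral_congr_ae (hae.mono fun t h => h.symm)

/-- **Independence of the root selection.**
Let `d ≥ 1`, `I = (α,β)` a bounded open interval, and `f, g : I → ℂ` continuous with
`f^d = g^d` on `I`.  If `f` is absolutely continuous on `I` with `f′ ∈ L^1(I)`, then `g`
is absolutely continuous on `I` and `‖f′‖_{L^1(I)} = ‖g′‖_{L^1(I)}`. -/
theorem root_selection_independence
    (d : ℕ) (hd : 1 ≤ d) (α β : ℝ) (hαβ : α < β)
    (f g : ℝ → ℂ)
    (hf : ContinuousOn f (Set.Ioo α β)) (hg : ContinuousOn g (Set.Ioo α β))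
    (hfg : ∀ t ∈ Set.Ioo α β, f t ^ d = g t ^ d)
    (hfAC : AbsolutelyContinuousOn f (Set.Ioo α β))
    (hfL1 : IntegrableOn (deriv f) (Set.Ioo α β)) :
    AbsolutelyContinuousOn g (Set.Ioo α β) ∧
    IntegrableOn (deriv g) (Set.Ioo α β) ∧
    ∫ t in Set.Ioo α β, ‖deriv f t‖ = ∫ t in Set.Ioo α β, ‖deriv g t‖ :=
  root_selection_independence_general d hd α β f g hf hg hfg hfAC hfL1
end
end

section
/- Let I ⊆ ℝ be a bounded open interval, m ∈ ℕ with m ≥ 1, and α ∈ (0,1]. There is a constant C depending only on m and α such that: if f ∈ C^{m,α}(Ī) (complex valued), then for all t ∈ I and all s = 1,…,m, |f^{(s)}(t)| ≤ C |I|^{−s} ( V_I(f) + V_I(f)^{(m+α−s)/(m+α)} · (Höld_{α,I}(f^{(m)}))^{s/(m+α)} · |I|^s ), where V_I(f) := sup_{t,s ∈ I} |f(t) − f(s)| is the diameter of f(I) and Höld_{α,I}(h) := sup_{x≠y ∈ I} |h(x)−h(y)|/|x−y|^α. -/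
open MeasureTheory Set
open scoped ENNReal NNReal

noncomputable section

/-- The Hölder seminorm (best Hölder constant of exponent `a`) of `f` on `s`. -/
def holderConstOn {E : Type*} [NormedAddCommGroup E] (a : ℝ) (f : ℝ → E) (s : Set ℝ) : ℝ :=
  sInf {C : ℝ | 0 ≤ C ∧ ∀ x ∈ s, ∀ y ∈ s, ‖f x - f y‖ ≤ C * |x - y| ^ a}

/-!
On an interval `J ⊆ I` of length `h` containing `t`, the Taylor polynomial of order `m` of `f`
at `t` differs from `f` by at most `H h^(m+a)`: apply the mean value theorem to the Taylor
expansion at a moving base point whose top coefficient is frozen at `t`. Read along one half of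
`J`, this Taylor polynomial is a polynomial on `[0, 1]` whose oscillation is at most
`V + H h^(m+a)`, so by inverting a Vandermonde matrix its coefficients `(±h/2)^s f^(s)(t) / s!`
are bounded by the same quantity. Hence `|f^(s)(t)| ≲ h^(-s) (V + H h^(m+a))` for every
`h ≤ |I|`; taking `h = |I|` when `H |I|^(m+a) ≤ V`, and otherwise the `h` with `H h^(m+a) = V`
(or `h → 0` when `V = 0`), gives the inequality.
-/

variable {E : Type*} [NormedAddCommGroup E]

theorem holderConstOn_nonneg {f : ℝ → E} {a : ℝ} {s : Set ℝ} : 0 ≤ holderConstOn a f s :=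
  Real.sInf_nonneg fun _ hC => hC.1

theorem norm_sub_le_holderConstOn_mul {f : ℝ → E} {a H : ℝ} {s : Set ℝ} (hH : 0 ≤ H)
    (hf : ∀ x ∈ s, ∀ y ∈ s, ‖f x - f y‖ ≤ H * |x - y| ^ a) :
    ∀ x ∈ s, ∀ y ∈ s, ‖f x - f y‖ ≤ holderConstOn a f s * |x - y| ^ a := by
  intro x hx y hy
  rcases eq_or_ne x y with rfl | hxy
  · rw [sub_self, norm_zero]
    exact mul_nonneg holderConstOn_nonneg (Real.rpow_nonneg (abs_nonneg _) a)
  have hpos : 0 < |x - y| ^ a := Real.rpow_pos_of_pos (abs_pos.mpr (sub_ne_zero.mpr hxy)) a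
  rw [← div_le_iff₀ hpos]
  exact le_csInf ⟨H, hH, hf⟩ fun C hC => (div_le_iff₀ hpos).mpr (hC.2 x hx y hy)

theorem dist_le_diam_image_Ioo {Y : Type*} [PseudoMetricSpace Y] {f : ℝ → Y} {α β x y : ℝ}
    (hαβ : α < β) (hf : ContinuousOn f (Icc α β)) (hx : x ∈ Icc α β) (hy : y ∈ Icc α β) :
    dist (f x) (f y) ≤ Metric.diam (f '' Ioo α β) := by
  have hcl : f '' Icc α β ⊆ closure (f '' Ioo α β) := by
    have h := ContinuousOn.image_closure (s := Ioo α β) (by rwa [closure_Ioo hαβ.ne])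
    rwa [closure_Ioo hαβ.ne] at h
  have hbdd : Bornology.IsBounded (closure (f '' Ioo α β)) :=
    ((isCompact_Icc.image_of_continuousOn hf).isBounded.subset
      (image_mono Ioo_subset_Icc_self)).closure
  rw [← Metric.diam_closure]
  exact Metric.dist_le_diam_of_mem hbdd (hcl ⟨x, hx, rfl⟩) (hcl ⟨y, hy, rfl⟩)

theorem nonpos_of_forall_le_mul_rpow {D K q L : ℝ} (hq : 0 < q) (hL : 0 < L)
    (h : ∀ x, 0 < x → x ≤ L → D ≤ K * x ^ q) : D ≤ 0 := by
  have hlim : Filter.Tendsto (fun x : ℝ => K * x ^ q) (nhdsWithin 0 (Ioi 0)) (nhds 0) := by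
    simpa [Real.zero_rpow hq.ne'] using
      ((Real.continuous_rpow_const hq.le).tendsto 0).const_mul K |>.mono_left nhdsWithin_le_nhds
  exact ge_of_tendsto hlim (Filter.mem_of_superset (Ioc_mem_nhdsGT hL) fun x hx => h x hx.1 hx.2)

theorem le_of_forall_le_rpow_neg_mul_add {D K V Λ L s p : ℝ} (hp : 0 < p) (hsp : s < p)
    (hK : 0 ≤ K) (hV : 0 ≤ V) (hΛ : 0 ≤ Λ) (hL : 0 < L)
    (h : ∀ x, 0 < x → x ≤ L → D ≤ K * x ^ (-s) * (V + Λ * x ^ p)) :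
    D ≤ 2 * K * L ^ (-s) * (V + V ^ ((p - s) / p) * Λ ^ (s / p) * L ^ s) := by
  have hT : 0 ≤ V ^ ((p - s) / p) * Λ ^ (s / p) * L ^ s := by positivity
  rcases le_or_gt (Λ * L ^ p) V with hlarge | hsmall
  · calc D ≤ K * L ^ (-s) * (V + Λ * L ^ p) := h L hL le_rfl
      _ ≤ 2 * K * L ^ (-s) * (V + V ^ ((p - s) / p) * Λ ^ (s / p) * L ^ s) := by
        nlinarith [show 0 ≤ K * L ^ (-s) by positivity]
  have hΛpos : 0 < Λ := pos_of_mul_pos_left (hV.trans_lt hsmall) (by positivity)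
  rcases hV.eq_or_lt with rfl | hVpos
  · refine (nonpos_of_forall_le_mul_rpow (K := K * Λ) (sub_pos.mpr hsp) hL fun x hx hxL => ?_).trans
      (by positivity)
    calc D ≤ K * x ^ (-s) * (0 + Λ * x ^ p) := h x hx hxL
      _ = K * Λ * x ^ (p - s) := by
        rw [sub_eq_neg_add, Real.rpow_add hx]
        ring
  -- the scale `x₀` balancing the two terms: `Λ * x₀ ^ p = V`
  set x₀ := (V / Λ) ^ p⁻¹
  have hVΛ : 0 < V / Λ := div_pos hVpos hΛpos
  have hx₀ : 0 < x₀ := Real.rpow_pos_of_pos hVΛ _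
  have hx₀p : x₀ ^ p = V / Λ := Real.rpow_inv_rpow hVΛ.le hp.ne'
  have hx₀L : x₀ ≤ L := by
    rw [← Real.rpow_le_rpow_iff hx₀.le hL.le hp, hx₀p, div_le_iff₀ hΛpos]
    linarith
  have hbal : V * x₀ ^ (-s) = V ^ ((p - s) / p) * Λ ^ (s / p) := by
    have hexp : 1 + p⁻¹ * -s = (p - s) / p := by
      field_simp
      ring
    rw [← Real.rpow_mul hVΛ.le, Real.div_rpow hV hΛ, div_eq_mul_inv, ← Real.rpow_neg hΛ,
      ← mul_assoc, ← Real.rpow_one_add' hV (hexp ▸ (div_pos (sub_pos.mpr hsp) hp).ne'), hexp]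
    ring_nf
  calc D ≤ K * x₀ ^ (-s) * (V + V) := by
        simpa [hx₀p, mul_div_cancel₀ V hΛpos.ne'] using h x₀ hx₀ hx₀L
    _ = 2 * K * L ^ (-s) * (V ^ ((p - s) / p) * Λ ^ (s / p) * L ^ s) := by
        rw [← hbal, Real.rpow_neg hL.le]
        field_simp
        ring
    _ ≤ 2 * K * L ^ (-s) * (V + V ^ ((p - s) / p) * Λ ^ (s / p) * L ^ s) := by
        gcongr
        exact le_add_of_nonneg_left hV

section Taylor

open Finset
open scoped Nat

variable [NormedSpace ℝ E]

theorem exists_norm_le_of_norm_sum_pow_smul_le (n : ℕ) :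
    ∃ C : ℝ, 0 < C ∧ ∀ (b : Fin (n + 1) → E) (M : ℝ),
      (∀ u ∈ Icc (0 : ℝ) 1, ‖∑ j : Fin (n + 1), u ^ (j : ℕ) • b j‖ ≤ M) → ∀ k, ‖b k‖ ≤ C * M := by
  -- invert the Vandermonde matrix of the nodes `i / (n + 1)`, `i ≤ n`
  set v : Fin (n + 1) → ℝ := fun i => (i : ℝ) / (n + 1)
  have hv : Function.Injective v := fun i j hij => by
    simpa [v, div_left_inj' (by positivity : (n : ℝ) + 1 ≠ 0), Fin.val_inj] using hij
  set W := Matrix.vandermonde v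
  have hW : IsUnit W.det := (Matrix.det_vandermonde_ne_zero_iff.mpr hv).isUnit
  refine ⟨1 + ∑ k, ∑ i, |W⁻¹ k i|, by positivity, fun b M hM k => ?_⟩
  have hnode : ∀ i, ‖∑ j, W i j • b j‖ ≤ M := fun i => by
    refine hM (v i) ⟨by positivity, div_le_one_of_le₀ ?_ (by positivity)⟩
    exact_mod_cast i.is_lt.le
  have hM0 : 0 ≤ M := (norm_nonneg _).trans (hnode 0)
  have hb : b k = ∑ i, W⁻¹ k i • ∑ j, W i j • b j := by
    simp_rw [smul_sum, smul_smul]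
    rw [sum_comm]
    simp_rw [← sum_smul, ← Matrix.mul_apply, Matrix.nonsing_inv_mul W hW, Matrix.one_apply,
      ite_smul, one_smul, zero_smul, sum_ite_eq, if_pos (Finset.mem_univ k)]
  calc ‖b k‖ ≤ ∑ i, |W⁻¹ k i| * M := by
        rw [hb]
        refine (norm_sum_le _ _).trans (sum_le_sum fun i _ => ?_)
        rw [norm_smul, Real.norm_eq_abs]
        exact mul_le_mul_of_nonneg_left (hnode i) (abs_nonneg _)
    _ ≤ (1 + ∑ k, ∑ i, |W⁻¹ k i|) * M := by
        rw [← sum_mul]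
        gcongr
        exact (single_le_sum (fun k _ => sum_nonneg fun i _ => abs_nonneg (W⁻¹ k i))
          (Finset.mem_univ k)).trans (le_add_of_nonneg_left zero_le_one)

theorem exists_norm_le_of_norm_sum_pow_smul_sub_le (n : ℕ) :
    ∃ C : ℝ, 0 < C ∧ ∀ (b : ℕ → E) (M : ℝ),
      (∀ u ∈ Icc (0 : ℝ) 1, ‖∑ j ∈ range (n + 1), u ^ j • b j - b 0‖ ≤ M) →
        ∀ k, 1 ≤ k → k ≤ n → ‖b k‖ ≤ C * M := by
  obtain ⟨C, hC, hcoeff⟩ := exists_norm_le_of_norm_sum_pow_smul_le (E := E) n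
  refine ⟨C, hC, fun b M hM k hk1 hkn => ?_⟩
  have h := hcoeff (fun j => if (j : ℕ) = 0 then 0 else b j) M (fun u hu => ?_) ⟨k, by omega⟩
  · simpa [Nat.one_le_iff_ne_zero.mp hk1] using h
  · convert hM u hu using 2
    rw [Fin.sum_univ_eq_sum_range (fun j => u ^ j • if j = 0 then 0 else b j),
      sum_range_succ', sum_range_succ' (fun j => u ^ j • b j)]
    simp

theorem norm_sub_taylorWithinEval_le_of_holder {f : ℝ → E} {k : ℕ} {a c d H t x : ℝ}
    (ha : 0 ≤ a) (hcd : c < d) (hf : ContDiffOn ℝ (k + 1) f (Icc c d)) (hH : 0 ≤ H)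
    (hHold : ∀ x ∈ Icc c d, ∀ y ∈ Icc c d,
      ‖iteratedDerivWithin (k + 1) f (Icc c d) x - iteratedDerivWithin (k + 1) f (Icc c d) y‖ ≤
        H * |x - y| ^ a)
    (ht : t ∈ Icc c d) (hx : x ∈ Icc c d) :
    ‖f x - taylorWithinEval f (k + 1) (Icc c d) t x‖ ≤ H * (d - c) ^ (((k + 1 : ℕ) : ℝ) + a) := by
  set s := Icc c d
  set D := iteratedDerivWithin (k + 1) f s t
  -- `F y` is the Taylor expansion of order `k + 1` at `y`, with top coefficient frozen at `t`
  set F : ℝ → E := fun y =>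
    taylorWithinEval f k s y x + (((k + 1 : ℝ) * k !)⁻¹ * (x - y) ^ (k + 1)) • D
  set F' : ℝ → E := fun y => ((k ! : ℝ)⁻¹ * (x - y) ^ k) • (iteratedDerivWithin (k + 1) f s y - D)
  have hdist : ∀ y ∈ s, ∀ z ∈ s, |y - z| ≤ d - c := fun y hy z hz =>
    (Real.dist_eq y z).symm.le.trans (Real.dist_le_of_mem_Icc hy hz)
  have hder : ∀ y ∈ s, HasDerivWithinAt F (F' y) s y := by
    intro y hy
    have hdiff : DifferentiableOn ℝ (iteratedDerivWithin k f s) s :=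
      hf.differentiableOn_iteratedDerivWithin (by exact_mod_cast k.lt_succ_self)
        (uniqueDiffOn_Icc hcd)
    have hcoeff : ((k + 1 : ℝ) * k !)⁻¹ * (-(k + 1) * (x - y) ^ k) =
        -((k ! : ℝ)⁻¹ * (x - y) ^ k) := by
      field_simp
    refine ((hasDerivWithinAt_taylorWithinEval_at_Icc x hcd hy hf.of_succ hdiff).add
      (((monomial_has_deriv_aux y x k).const_mul _).smul_const D).hasDerivWithinAt).congr_deriv ?_
    rw [hcoeff, neg_smul, ← sub_eq_add_neg, ← smul_sub]
  have hF' : ∀ y ∈ s, ‖F' y‖ ≤ (d - c) ^ k * (H * (d - c) ^ a) := by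
    intro y hy
    rw [norm_smul, Real.norm_eq_abs, abs_mul, abs_pow, abs_inv, Nat.abs_cast]
    have hfac : (k ! : ℝ)⁻¹ ≤ 1 := inv_le_one_of_one_le₀ (by exact_mod_cast k.factorial_pos)
    calc (k ! : ℝ)⁻¹ * |x - y| ^ k * ‖iteratedDerivWithin (k + 1) f s y - D‖
        ≤ 1 * (d - c) ^ k * (H * (d - c) ^ a) := by
          gcongr
          · exact hdist x hx y hy
          · exact (hHold y hy t ht).trans (by gcongr; exact hdist y hy t ht)
      _ = (d - c) ^ k * (H * (d - c) ^ a) := by rw [one_mul]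
  have hFx : F x = f x := by simp [F]
  have hFt : F t = taylorWithinEval f (k + 1) s t x := (taylorWithinEval_succ f k s t x).symm
  calc ‖f x - taylorWithinEval f (k + 1) s t x‖
      ≤ (d - c) ^ k * (H * (d - c) ^ a) * ‖x - t‖ := by
        simpa only [hFx, hFt] using
          Convex.norm_image_sub_le_of_norm_hasDerivWithin_le hder hF' (convex_Icc c d) ht hx
    _ ≤ (d - c) ^ k * (H * (d - c) ^ a) * (d - c) := by
        gcongr
        exact hdist x hx t ht
    _ = H * (d - c) ^ (((k + 1 : ℕ) : ℝ) + a) := by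
        rw [Real.rpow_add (by linarith), Real.rpow_natCast]
        ring

theorem exists_abs_eq_half_and_add_mul_mem_Icc {c d t : ℝ} (ht : t ∈ Icc c d) :
    ∃ r : ℝ, |r| = (d - c) / 2 ∧ ∀ u ∈ Icc (0 : ℝ) 1, t + r * u ∈ Icc c d := by
  obtain ⟨htc, htd⟩ := ht
  by_cases hmid : t ≤ (c + d) / 2
  · refine ⟨(d - c) / 2, abs_of_nonneg (by linarith), fun u ⟨hu0, hu1⟩ => ⟨?_, ?_⟩⟩ <;> nlinarith
  · refine ⟨-((d - c) / 2), by rw [abs_neg, abs_of_nonneg (by linarith)],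
      fun u ⟨hu0, hu1⟩ => ⟨?_, ?_⟩⟩ <;> nlinarith

theorem exists_norm_iteratedDerivWithin_le_of_holder (m : ℕ) {a : ℝ} (ha : 0 ≤ a) :
    ∃ C : ℝ, 0 < C ∧ ∀ c d : ℝ, c < d → ∀ f : ℝ → E, ContDiffOn ℝ m f (Icc c d) →
      ∀ H : ℝ, 0 ≤ H → (∀ x ∈ Icc c d, ∀ y ∈ Icc c d,
        ‖iteratedDerivWithin m f (Icc c d) x - iteratedDerivWithin m f (Icc c d) y‖ ≤
          H * |x - y| ^ a) →
      ∀ V : ℝ, (∀ x ∈ Icc c d, ∀ y ∈ Icc c d, ‖f x - f y‖ ≤ V) →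
      ∀ t ∈ Icc c d, ∀ s : ℕ, 1 ≤ s → s ≤ m →
        ‖iteratedDerivWithin s f (Icc c d) t‖ ≤
          C * (d - c) ^ (-(s : ℝ)) * (V + H * (d - c) ^ ((m : ℝ) + a)) := by
  rcases m with _ | k
  · exact ⟨1, one_pos, fun _ _ _ _ _ _ _ _ _ _ _ _ s hs1 hs0 => absurd hs1 (by omega)⟩
  obtain ⟨C, hC, hcoeff⟩ := exists_norm_le_of_norm_sum_pow_smul_sub_le (E := E) (k + 1)
  refine ⟨(k + 1)! * 2 ^ (k + 1) * C, by positivity, ?_⟩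
  intro c d hcd f hf H hH hHold V hV t ht s hs1 hsm
  obtain ⟨r, hr, hmem⟩ := exists_abs_eq_half_and_add_mul_mem_Icc ht
  set M := V + H * (d - c) ^ (((k + 1 : ℕ) : ℝ) + a)
  have hV0 : 0 ≤ V := by simpa using hV t ht t ht
  have hM : 0 ≤ M := by positivity
  -- the Taylor polynomial at `t`, read along the half-interval `t + r • [0, 1]`
  set b : ℕ → E := fun j => (r ^ j / j !) • iteratedDerivWithin j f (Icc c d) t
  have hb : ∀ u ∈ Icc (0 : ℝ) 1, ‖∑ j ∈ range (k + 1 + 1), u ^ j • b j - b 0‖ ≤ M := by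
    intro u hu
    have hT : ∑ j ∈ range (k + 1 + 1), u ^ j • b j =
        taylorWithinEval f (k + 1) (Icc c d) t (t + r * u) := by
      rw [taylor_within_apply]
      refine sum_congr rfl fun j _ => ?_
      rw [smul_smul, add_sub_cancel_left]
      ring_nf
    rw [hT, show b 0 = f t by simp [b]]
    calc _ ≤ ‖taylorWithinEval f (k + 1) (Icc c d) t (t + r * u) - f (t + r * u)‖ +
          ‖f (t + r * u) - f t‖ := norm_sub_le_norm_sub_add_norm_sub _ _ _
      _ ≤ H * (d - c) ^ (((k + 1 : ℕ) : ℝ) + a) + V := by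
          rw [norm_sub_rev]
          exact add_le_add (norm_sub_taylorWithinEval_le_of_holder ha hcd hf hH hHold ht
            (hmem u hu)) (hV _ (hmem u hu) t ht)
      _ = M := add_comm _ _
  have hbs : ((d - c) / 2) ^ s / s ! * ‖iteratedDerivWithin s f (Icc c d) t‖ ≤ C * M := by
    simpa [b, norm_smul, abs_div, hr] using hcoeff b M hb s hs1 hsm
  have hpos : 0 < d - c := sub_pos.mpr hcd
  calc ‖iteratedDerivWithin s f (Icc c d) t‖
      = s ! * 2 ^ s * (d - c) ^ (-(s : ℝ)) *
          (((d - c) / 2) ^ s / s ! * ‖iteratedDerivWithin s f (Icc c d) t‖) := by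
        rw [Real.rpow_neg hpos.le, Real.rpow_natCast, div_pow]
        field_simp
    _ ≤ (k + 1)! * 2 ^ (k + 1) * (d - c) ^ (-(s : ℝ)) * (C * M) := by
        gcongr
        exact one_le_two
    _ = (k + 1)! * 2 ^ (k + 1) * C * (d - c) ^ (-(s : ℝ)) * M := by ring

theorem exists_Icc_add_subset_Icc_and_mem {α β t h : ℝ} (ht : t ∈ Icc α β) (hh : 0 ≤ h)
    (hhL : h ≤ β - α) : ∃ c, Icc c (c + h) ⊆ Icc α β ∧ t ∈ Icc c (c + h) := by
  obtain ⟨htα, htβ⟩ := ht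
  rcases le_total α (t - h) with hle | hle
  · exact ⟨t - h, Icc_subset_Icc hle (by linarith), by linarith, by linarith⟩
  · exact ⟨α, Icc_subset_Icc le_rfl (by linarith), htα, by linarith⟩

theorem exists_norm_iteratedDerivWithin_le_of_holder_of_le (m : ℕ) {a : ℝ} (ha : 0 ≤ a) :
    ∃ C : ℝ, 0 < C ∧ ∀ α β : ℝ, ∀ f : ℝ → E, ContDiffOn ℝ m f (Icc α β) →
      ∀ H : ℝ, 0 ≤ H → (∀ x ∈ Icc α β, ∀ y ∈ Icc α β,
        ‖iteratedDerivWithin m f (Icc α β) x - iteratedDerivWithin m f (Icc α β) y‖ ≤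
          H * |x - y| ^ a) →
      ∀ V : ℝ, (∀ x ∈ Icc α β, ∀ y ∈ Icc α β, ‖f x - f y‖ ≤ V) →
      ∀ t ∈ Icc α β, ∀ s : ℕ, 1 ≤ s → s ≤ m → ∀ h : ℝ, 0 < h → h ≤ β - α →
        ‖iteratedDerivWithin s f (Icc α β) t‖ ≤
          C * h ^ (-(s : ℝ)) * (V + H * h ^ ((m : ℝ) + a)) := by
  obtain ⟨C, hC, hloc⟩ := exists_norm_iteratedDerivWithin_le_of_holder (E := E) m ha
  refine ⟨C, hC, fun α β f hf H hH hHold V hV t ht s hs1 hsm h hh hhL => ?_⟩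
  obtain ⟨c, hsub, htc⟩ := exists_Icc_add_subset_Icc_and_mem ht hh.le hhL
  have hcd : c < c + h := lt_add_of_pos_right c hh
  have hαβ : α < β := by linarith
  have hderiv : ∀ j ≤ m, ∀ x ∈ Icc c (c + h),
      iteratedDerivWithin j f (Icc c (c + h)) x = iteratedDerivWithin j f (Icc α β) x :=
    fun j hj x hx => by
      simp only [iteratedDerivWithin_eq_iteratedFDerivWithin]
      rw [iteratedFDerivWithin_subset hsub (uniqueDiffOn_Icc hcd) (uniqueDiffOn_Icc hαβ)
        (hf.of_le (by exact_mod_cast hj)) hx]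
  have := hloc c (c + h) hcd f (hf.mono hsub) H hH
    (fun x hx y hy => by
      rw [hderiv m le_rfl x hx, hderiv m le_rfl y hy]
      exact hHold x (hsub hx) y (hsub hy))
    V (fun x hx y hy => hV x (hsub hx) y (hsub hy)) t htc s hs1 hsm
  rwa [hderiv s hsm t htc, add_sub_cancel_left] at this

end Taylor

theorem interpolation_inequality_general
    (m : ℕ) (a : ℝ) (ha : 0 < a) :
    ∃ C : ℝ, 0 < C ∧
      ∀ α β : ℝ, α < β →
        ∀ f : ℝ → ℂ,
          ContDiffOn ℝ m f (Set.Icc α β) →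
          (∃ H : ℝ, 0 ≤ H ∧ ∀ x ∈ Set.Icc α β, ∀ y ∈ Set.Icc α β,
            ‖iteratedDerivWithin m f (Set.Icc α β) x -
              iteratedDerivWithin m f (Set.Icc α β) y‖ ≤ H * |x - y| ^ a) →
          ∀ t ∈ Set.Ioo α β, ∀ s : ℕ, 1 ≤ s → s ≤ m →
            ‖iteratedDerivWithin s f (Set.Icc α β) t‖ ≤
              C * (β - α) ^ (-(s : ℝ)) *
                (Metric.diam (f '' Set.Ioo α β) +
                  Metric.diam (f '' Set.Ioo α β) ^ (((m : ℝ) + a - s) / ((m : ℝ) + a)) *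
                    (holderConstOn a (iteratedDerivWithin m f (Set.Icc α β)) (Set.Icc α β)) ^
                      ((s : ℝ) / ((m : ℝ) + a)) *
                    (β - α) ^ (s : ℝ)) := by
  obtain ⟨C, hC, hscale⟩ := exists_norm_iteratedDerivWithin_le_of_holder_of_le (E := ℂ) m ha.le
  refine ⟨2 * C, by positivity, fun α β hαβ f hf ⟨H, hH, hHold⟩ t ht s hs1 hsm => ?_⟩
  have hsp : (s : ℝ) < m + a := by
    have : (s : ℝ) ≤ m := by exact_mod_cast hsm
    linarith
  refine le_of_forall_le_rpow_neg_mul_add (by positivity) hsp hC.le Metric.diam_nonneg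
    holderConstOn_nonneg (sub_pos.mpr hαβ) fun x hx hxL => ?_
  refine hscale α β f hf _ holderConstOn_nonneg (norm_sub_le_holderConstOn_mul hH hHold) _
    (fun x hx y hy => ?_) t (Ioo_subset_Icc_self ht) s hs1 hsm x hx hxL
  rw [← dist_eq_norm]
  exact dist_le_diam_image_Ioo hαβ hf.continuousOn hx hy

/-- **Interpolation inequality.**
Let `m ≥ 1` and `a ∈ (0,1]`.  There is a constant `C = C(m,a)` such that for every
bounded open interval `I = (α,β)` and every `f ∈ C^{m,a}(Ī)` (complex valued), for all
`t ∈ I` and `s = 1,…,m`: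
`|f^{(s)}(t)| ≤ C |I|^{-s} (V_I(f) + V_I(f)^{(m+a-s)/(m+a)} · Höld_{a,I}(f^{(m)})^{s/(m+a)} · |I|^s)`,
where `V_I(f) = diam f(I)`. -/
theorem interpolation_inequality
    (m : ℕ) (hm : 1 ≤ m) (a : ℝ) (ha : 0 < a) (ha1 : a ≤ 1) :
    ∃ C : ℝ, 0 < C ∧
      ∀ α β : ℝ, α < β →
        ∀ f : ℝ → ℂ,
          ContDiffOn ℝ m f (Set.Icc α β) →
          (∃ H : ℝ, 0 ≤ H ∧ ∀ x ∈ Set.Icc α β, ∀ y ∈ Set.Icc α β,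
            ‖iteratedDerivWithin m f (Set.Icc α β) x -
              iteratedDerivWithin m f (Set.Icc α β) y‖ ≤ H * |x - y| ^ a) →
          ∀ t ∈ Set.Ioo α β, ∀ s : ℕ, 1 ≤ s → s ≤ m →
            ‖iteratedDerivWithin s f (Set.Icc α β) t‖ ≤
              C * (β - α) ^ (-(s : ℝ)) *
                (Metric.diam (f '' Set.Ioo α β) +
                  Metric.diam (f '' Set.Ioo α β) ^ (((m : ℝ) + a - s) / ((m : ℝ) + a)) *
                    (holderConstOn a (iteratedDerivWithin m f (Set.Icc α β)) (Set.Icc α β)) ^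
                      ((s : ℝ) / ((m : ℝ) + a)) *
                    (β - α) ^ (s : ℝ)) :=
  interpolation_inequality_general m a ha
end
end

section
/- Let G be a finite group and G ⟳ V a representation on a finite-dimensional complex vector space with V^G = {0}, σ = (σ_1,…,σ_n) homogeneous basic invariants of degrees d_j, d = max_j d_j. Let a ∈ C^{d−1,1}([α,β], ℂ^n) take values in σ(V), with continuous selections â_j of a_j^{1/d_j}, and let 0 < B < 1/3. Let t₀ ∈ (α,β) and k satisfy |â_k(t₀)| = max_j |â_j(t₀)| ≠ 0, and let I be an open interval with t₀ ∈ I ⊆ (α,β) such that M|I| + Σ_j ‖â_j′‖_{L^1(I)} ≤ B|â_k(t₀)|, where M := max_{1≤j≤n} (Lip_I(a_j^{(d−1)}))^{1/d} |â_k(t₀)|^{(d−d_j)/d}. Then there is a constant C depending only on d (and B) such that for all j = 1,…,n and s = 1,…,d−1: ‖a_j^{(s)}‖_{L^∞(I)} ≤ C |I|^{−s} |â_k(t₀)|^{d_j} and Lip_I(a_j^{(d−1)}) ≤ C |I|^{−d} |â_k(t₀)|^{d_j}. -/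
open MeasureTheory Set
open scoped ENNReal NNReal

noncomputable section

/-!
Raising the defining inequality `M |I| ≤ B |â_k(t₀)|` to the power `d` bounds
`Lip_I (a_j^{(d-1)})` by `B^d |I|^{-d} |â_k(t₀)|^{d_j}`. The selection `â_j` is differentiable
wherever it does not vanish (it is a local inverse of `z ↦ z^{d_j}` composed with `a_j`), so its
variation on `I` is at most `‖â_j′‖_{L¹(I)} ≤ B |â_k(t₀)|`; hence
`|a_j| ≤ ((1 + B) |â_k(t₀)|)^{d_j}` on `I`. The intermediate derivatives then follow from an
interpolation inequality on an interval of length `h`: if `|f| ≤ A` and `Lip (f^{(m)}) ≤ L`, then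
`|f^{(s)}| h^s ≤ (m + 1) 6^{m²} A + L h^{m+1}`, a consequence of the mean value theorem.
-/

open Filter Topology
open scoped Interval

section RootSelection

variable {E : Type*} [NormedAddCommGroup E] [NormedSpace ℝ E] [CompleteSpace E]

theorem norm_sub_le_integral_uIoc_of_hasDerivAt {f f' : ℝ → E} {a b : ℝ}
    (hcont : ContinuousOn f (uIcc a b))
    (hderiv : ∀ t ∈ Ioo (min a b) (max a b), HasDerivAt f (f' t) t)
    (hint : IntervalIntegrable f' volume a b) :
    ‖f b - f a‖ ≤ ∫ t in Ι a b, ‖f' t‖ := by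
  rw [← intervalIntegral.integral_eq_sub_of_hasDeriv_right hcont
    (fun t ht => (hderiv t ht).hasDerivWithinAt) hint]
  exact intervalIntegral.norm_integral_le_integral_norm_uIoc

theorem abs_sub_lt_of_mem_Ioo_min_max {z y t : ℝ} (ht : t ∈ Ioo (min z y) (max z y)) :
    |t - y| < |z - y| := by
  rcases le_total z y with h | h
  · rw [min_eq_left h, max_eq_right h] at ht
    rw [abs_of_nonpos (by linarith [ht.2]), abs_of_nonpos (by linarith)]
    linarith [ht.1]
  · rw [min_eq_right h, max_eq_left h] at ht
    rw [abs_of_nonneg (by linarith [ht.1]), abs_of_nonneg (by linarith)]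
    linarith [ht.2]

/-- Between the zero of `g` in `[x, y]` closest to `y` and `y` itself the fundamental theorem of
calculus applies, and `‖g y‖` is the increment of `g` over that subinterval. -/
theorem norm_le_norm_add_integral_of_hasDerivAt_of_ne_zero {g g' : ℝ → E} {x y : ℝ}
    (hcont : ContinuousOn g (uIcc x y))
    (hderiv : ∀ t ∈ uIcc x y, g t ≠ 0 → HasDerivAt g (g' t) t)
    (hint : IntervalIntegrable g' volume x y) :
    ‖g y‖ ≤ ‖g x‖ + ∫ t in Ι x y, ‖g' t‖ := by
  set Z := uIcc x y ∩ g ⁻¹' {0}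
  rcases Z.eq_empty_or_nonempty with hZ | hZ
  · have hne : ∀ t ∈ uIcc x y, g t ≠ 0 := fun t ht h0 => hZ.subset ⟨ht, h0⟩
    have := norm_sub_le_integral_uIoc_of_hasDerivAt hcont
      (fun t ht => hderiv t (Ioo_subset_Icc_self ht) (hne t (Ioo_subset_Icc_self ht))) hint
    linarith [norm_sub_norm_le (g y) (g x)]
  have hZc : IsCompact Z := isCompact_uIcc.of_isClosed_subset
    (hcont.preimage_isClosed_of_isClosed isClosed_Icc isClosed_singleton) inter_subset_left
  obtain ⟨z, ⟨hzxy, hz0⟩, hzmin⟩ :=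
    hZc.exists_isMinOn hZ (continuous_id.sub continuous_const).abs.continuousOn
  have hzy : uIcc z y ⊆ uIcc x y := uIcc_subset_uIcc hzxy right_mem_uIcc
  have hstep : ‖g y - g z‖ ≤ ∫ t in Ι z y, ‖g' t‖ := by
    refine norm_sub_le_integral_uIoc_of_hasDerivAt (hcont.mono hzy) (fun t ht => ?_)
      (hint.mono_set hzy)
    refine hderiv t (hzy (Ioo_subset_Icc_self ht)) fun h0 => ?_
    have : |z - y| ≤ |t - y| := hzmin ⟨hzy (Ioo_subset_Icc_self ht), h0⟩
    exact (abs_sub_lt_of_mem_Ioo_min_max ht).not_ge this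
  have hmono : ∫ t in Ι z y, ‖g' t‖ ≤ ∫ t in Ι x y, ‖g' t‖ :=
    setIntegral_mono_set hint.def'.norm (Eventually.of_forall fun _ => norm_nonneg _)
      (uIoc_subset_uIoc_of_uIcc_subset_uIcc hzy).eventuallyLE
  simp only [mem_preimage, mem_singleton_iff] at hz0
  rw [hz0, sub_zero] at hstep
  linarith [norm_nonneg (g x)]

end RootSelection

theorem differentiableAt_of_pow_eventuallyEq {𝕜 : Type*} [RCLike 𝕜] {q : ℕ} (hq : q ≠ 0)
    {g f : ℝ → 𝕜} {u : ℝ} (hg : ContinuousAt g u) (hgf : (fun t => g t ^ q) =ᶠ[𝓝 u] f)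
    (hf : DifferentiableAt ℝ f u) (h0 : g u ≠ 0) : DifferentiableAt ℝ g u := by
  have hpow : HasStrictDerivAt (fun z : 𝕜 => z ^ q) (q * g u ^ (q - 1)) (g u) :=
    hasStrictDerivAt_pow q (g u)
  have hne : (q : 𝕜) * g u ^ (q - 1) ≠ 0 := mul_ne_zero (by exact_mod_cast hq) (pow_ne_zero _ h0)
  set φ := hpow.localInverse _ _ _ hne
  have hleft : ∀ᶠ t in 𝓝 u, φ (g t ^ q) = g t :=
    hg.eventually (hpow.hasStrictFDerivAt_equiv hne).eventually_left_inverse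
  have heq : g =ᶠ[𝓝 u] fun t => φ (f t) := by
    filter_upwards [hleft, hgf] with t h1 h2
    rw [← h2, h1]
  have hφ : DifferentiableAt 𝕜 φ (f u) := by
    rw [← hgf.eq_of_nhds]
    exact (hpow.to_localInverse hne).hasDerivAt.differentiableAt
  exact heq.differentiableAt_iff.2 ((hφ.restrictScalars ℝ).comp u hf)

theorem norm_le_norm_add_setIntegral_deriv_of_pow_eq {𝕜 : Type*} [RCLike 𝕜] {q : ℕ} (hq : q ≠ 0)
    {g f : ℝ → 𝕜} {U : Set ℝ} (hU : IsOpen U) (hUc : U.OrdConnected) (hg : ContinuousOn g U)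
    (hgf : ∀ t ∈ U, g t ^ q = f t) (hf : ∀ t ∈ U, DifferentiableAt ℝ f t)
    (hint : IntegrableOn (deriv g) U) {x y : ℝ} (hx : x ∈ U) (hy : y ∈ U) :
    ‖g y‖ ≤ ‖g x‖ + ∫ t in U, ‖deriv g t‖ := by
  have hxy : uIcc x y ⊆ U := hUc.uIcc_subset hx hy
  refine (norm_le_norm_add_integral_of_hasDerivAt_of_ne_zero (hg.mono hxy) (fun t ht h0 => ?_)
    (hint.mono_set hxy).intervalIntegrable).trans ?_
  · have hU_t := hU.mem_nhds (hxy ht)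
    exact (differentiableAt_of_pow_eventuallyEq hq (hg.continuousAt hU_t)
      (eventually_of_mem hU_t hgf) (hf t (hxy ht)) h0).hasDerivAt
  · exact add_le_add_right (setIntegral_mono_set hint.norm
      (Eventually.of_forall fun _ => norm_nonneg _) (hUc.uIoc_subset hx hy).eventuallyLE) _

/-- Split `(u, v)` into thirds: the induction hypothesis gives points in the outer thirds, at
distance at least `(v - u) / 3` apart, and the mean value theorem between them. -/
theorem exists_abs_mul_pow_le_of_hasDerivAt_chain {g : ℕ → ℝ → ℝ} {A : ℝ} (s : ℕ) {u v : ℝ}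
    (huv : u < v)
    (hder : ∀ i < s, ∀ t ∈ Ioo u v, HasDerivAt (g i) (g (i + 1) t) t)
    (hA : ∀ t ∈ Ioo u v, |g 0 t| ≤ A) :
    ∃ ξ ∈ Ioo u v, |g s ξ| * (v - u) ^ s ≤ 6 ^ (s * s) * A := by
  induction s generalizing u v with
  | zero =>
    have hmid : (u + v) / 2 ∈ Ioo u v := ⟨by linarith, by linarith⟩
    exact ⟨_, hmid, by simpa using hA _ hmid⟩
  | succ s ih =>
    obtain ⟨w, hvu⟩ : ∃ w, v - u = 3 * w := ⟨(v - u) / 3, by ring⟩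
    have hw : 0 < w := by linarith
    have hA0 : 0 ≤ A := (abs_nonneg _).trans (hA ((u + v) / 2) ⟨by linarith, by linarith⟩)
    obtain ⟨ξ₁, hξ₁, H₁⟩ := ih (u := u) (v := u + w) (by linarith)
      (fun i hi t ht => hder i (by omega) t ⟨ht.1, by linarith [ht.2]⟩)
      (fun t ht => hA t ⟨ht.1, by linarith [ht.2]⟩)
    obtain ⟨ξ₂, hξ₂, H₂⟩ := ih (u := v - w) (v := v) (by linarith)
      (fun i hi t ht => hder i (by omega) t ⟨by linarith [ht.1], ht.2⟩)
      (fun t ht => hA t ⟨by linarith [ht.1], ht.2⟩)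
    rw [add_sub_cancel_left] at H₁
    rw [sub_sub_cancel] at H₂
    have hgap : w ≤ ξ₂ - ξ₁ := by linarith [hξ₁.2, hξ₂.1]
    obtain ⟨ξ, hξ, hslope⟩ := exists_hasDerivAt_eq_slope (g s) (g (s + 1)) (a := ξ₁) (b := ξ₂)
      (by linarith)
      (fun t ht => (hder s (by omega) t ⟨by linarith [hξ₁.1, ht.1], by linarith [hξ₂.2, ht.2]⟩
        ).continuousAt.continuousWithinAt)
      (fun t ht => hder s (by omega) t ⟨by linarith [hξ₁.1, ht.1], by linarith [hξ₂.2, ht.2]⟩)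
    refine ⟨ξ, ⟨by linarith [hξ₁.1, hξ.1], by linarith [hξ₂.2, hξ.2]⟩, ?_⟩
    have hmvt : |g (s + 1) ξ| * (ξ₂ - ξ₁) ≤ |g s ξ₂| + |g s ξ₁| := by
      rw [hslope, abs_div, abs_of_pos (a := ξ₂ - ξ₁) (by linarith), div_mul_cancel₀ _ (by linarith)]
      exact abs_sub _ _
    have hthird : |g (s + 1) ξ| * w ^ (s + 1) ≤ 2 * 6 ^ (s * s) * A := by
      calc |g (s + 1) ξ| * w ^ (s + 1) = |g (s + 1) ξ| * w * w ^ s := by ring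
        _ ≤ (|g s ξ₂| + |g s ξ₁|) * w ^ s := by gcongr; nlinarith [abs_nonneg (g (s + 1) ξ)]
        _ ≤ 2 * 6 ^ (s * s) * A := by linarith
    have hconst : (2 : ℝ) * 3 ^ (s + 1) * 6 ^ (s * s) ≤ 6 ^ ((s + 1) * (s + 1)) := by
      calc (2 : ℝ) * 3 ^ (s + 1) * 6 ^ (s * s) ≤ 2 ^ (s + 1) * 3 ^ (s + 1) * 6 ^ (s * s) := by
            gcongr; exact le_self_pow₀ (by norm_num) (by omega)
        _ = 6 ^ (s + 1) * 6 ^ (s * s) := by rw [← mul_pow]; norm_num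
        _ ≤ 6 ^ (2 * s + 1) * 6 ^ (s * s) := by gcongr <;> [norm_num; omega]
        _ = 6 ^ ((s + 1) * (s + 1)) := by rw [← pow_add]; ring_nf
    calc |g (s + 1) ξ| * (v - u) ^ (s + 1) = 3 ^ (s + 1) * (|g (s + 1) ξ| * w ^ (s + 1)) := by
          rw [hvu, mul_pow]; ring
      _ ≤ 3 ^ (s + 1) * (2 * 6 ^ (s * s) * A) := by gcongr
      _ ≤ 6 ^ ((s + 1) * (s + 1)) * A := by nlinarith

/-- Downward induction on `s`: the point `ξ` from `exists_abs_mul_pow_le_of_hasDerivAt_chain`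
controls `g s` at one point, and the bound already proved for `g (s + 1)` (the Lipschitz bound when
`s = m`) controls the oscillation of `g s`. -/
theorem abs_mul_pow_le_of_hasDerivAt_chain {g : ℕ → ℝ → ℝ} {m : ℕ} {γ δ A L : ℝ} (hL : 0 ≤ L)
    (hder : ∀ i < m, ∀ t ∈ Ioo γ δ, HasDerivAt (g i) (g (i + 1) t) t)
    (hA : ∀ t ∈ Ioo γ δ, |g 0 t| ≤ A)
    (hlip : ∀ x ∈ Ioo γ δ, ∀ y ∈ Ioo γ δ, |g m x - g m y| ≤ L * |x - y|)
    {s : ℕ} (hs : s ≤ m) {t : ℝ} (ht : t ∈ Ioo γ δ) :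
    |g s t| * (δ - γ) ^ s ≤ (m + 1 : ℕ) * 6 ^ (m * m) * A + L * (δ - γ) ^ (m + 1) := by
  set h := δ - γ
  have hh : 0 < h := by linarith [ht.1, ht.2]
  have hA0 : 0 ≤ A := (abs_nonneg _).trans (hA t ht)
  have hdist : ∀ x ∈ Ioo γ δ, ∀ y ∈ Ioo γ δ, |x - y| ≤ h := fun x hx y hy =>
    abs_sub_le_iff.2 ⟨by linarith [hx.2, hy.1], by linarith [hx.1, hy.2]⟩
  have hpoint : ∀ s ≤ m, ∀ K, (∀ x ∈ Ioo γ δ, ∀ y ∈ Ioo γ δ, |g s x - g s y| * h ^ s ≤ K) →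
      ∀ t ∈ Ioo γ δ, |g s t| * h ^ s ≤ 6 ^ (m * m) * A + K := by
    intro s hs K hK t ht
    obtain ⟨ξ, hξ, hgξ⟩ := exists_abs_mul_pow_le_of_hasDerivAt_chain s (by linarith [ht.1, ht.2])
      (fun i hi => hder i (by omega)) hA
    have h6 : (6 : ℝ) ^ (s * s) ≤ 6 ^ (m * m) := pow_le_pow_right₀ (by norm_num) (by gcongr)
    calc |g s t| * h ^ s ≤ |g s ξ| * h ^ s + |g s t - g s ξ| * h ^ s := by
          rw [← add_mul]; gcongr; linarith [abs_sub_abs_le_abs_sub (g s t) (g s ξ)]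
      _ ≤ 6 ^ (m * m) * A + K := add_le_add (hgξ.trans (by gcongr)) (hK t ht ξ hξ)
  have key : ∀ j s, s + j = m → ∀ t ∈ Ioo γ δ,
      |g s t| * h ^ s ≤ (j + 1 : ℕ) * 6 ^ (m * m) * A + L * h ^ (m + 1) := by
    intro j
    induction j with
    | zero =>
      intro s hs t ht
      rw [show s = m by omega]
      refine (hpoint m le_rfl (L * h ^ (m + 1)) (fun x hx y hy => ?_) t ht).trans_eq
        (by push_cast; ring)
      calc |g m x - g m y| * h ^ m ≤ L * h * h ^ m := by
            gcongr; exact (hlip x hx y hy).trans (by gcongr; exact hdist x hx y hy)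
        _ = L * h ^ (m + 1) := by ring
    | succ j ih =>
      intro s hsj t ht
      have hbound : ∀ x ∈ Ioo γ δ, ‖g (s + 1) x‖ ≤
          ((j + 1 : ℕ) * 6 ^ (m * m) * A + L * h ^ (m + 1)) / h ^ (s + 1) := fun x hx =>
        (le_div_iff₀ (by positivity)).2 (ih (s + 1) (by omega) x hx)
      refine (hpoint s (by omega) ((j + 1 : ℕ) * 6 ^ (m * m) * A + L * h ^ (m + 1))
        (fun x hx y hy => ?_) t ht).trans_eq (by push_cast; ring)
      have hmvi := (convex_Ioo γ δ).norm_image_sub_le_of_norm_hasDerivWithin_le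
        (fun z hz => (hder s (by omega) z hz).hasDerivWithinAt) hbound hy hx
      rw [Real.norm_eq_abs, Real.norm_eq_abs] at hmvi
      calc |g s x - g s y| * h ^ s
          ≤ ((j + 1 : ℕ) * 6 ^ (m * m) * A + L * h ^ (m + 1)) / h ^ (s + 1) * h * h ^ s := by
            gcongr; exact hmvi.trans (by gcongr; exact hdist x hx y hy)
        _ = (j + 1 : ℕ) * 6 ^ (m * m) * A + L * h ^ (m + 1) := by field_simp; ring
  calc |g s t| * h ^ s ≤ (m - s + 1 : ℕ) * 6 ^ (m * m) * A + L * h ^ (m + 1) :=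
        key (m - s) s (by omega) t ht
    _ ≤ (m + 1 : ℕ) * 6 ^ (m * m) * A + L * h ^ (m + 1) := by gcongr; omega

theorem norm_mul_pow_le_of_hasDerivAt_chain {E : Type*} [NormedAddCommGroup E] [NormedSpace ℝ E]
    {F : ℕ → ℝ → E} {m : ℕ} {γ δ A L : ℝ} (hL : 0 ≤ L)
    (hder : ∀ i < m, ∀ t ∈ Ioo γ δ, HasDerivAt (F i) (F (i + 1) t) t)
    (hA : ∀ t ∈ Ioo γ δ, ‖F 0 t‖ ≤ A)
    (hlip : ∀ x ∈ Ioo γ δ, ∀ y ∈ Ioo γ δ, ‖F m x - F m y‖ ≤ L * |x - y|)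
    {s : ℕ} (hs : s ≤ m) {t : ℝ} (ht : t ∈ Ioo γ δ) :
    ‖F s t‖ * (δ - γ) ^ s ≤ (m + 1 : ℕ) * 6 ^ (m * m) * A + L * (δ - γ) ^ (m + 1) := by
  obtain ⟨ℓ, hℓ, hℓt⟩ := exists_dual_vector'' ℝ (F s t)
  have hℓle : ∀ y, |ℓ y| ≤ ‖y‖ := fun y =>
    (ℓ.le_opNorm y).trans (mul_le_of_le_one_left (norm_nonneg _) hℓ)
  have := abs_mul_pow_le_of_hasDerivAt_chain (g := fun i x => ℓ (F i x)) hL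
    (fun i hi x hx => ℓ.hasFDerivAt.comp_hasDerivAt x (hder i hi x hx))
    (fun x hx => (hℓle _).trans (hA x hx))
    (fun x hx y hy => by simpa only [← map_sub] using (hℓle _).trans (hlip x hx y hy)) hs ht
  simpa [hℓt] using this

theorem ContDiffOn.hasDerivAt_iteratedDerivWithin_Icc {E : Type*} [NormedAddCommGroup E]
    [NormedSpace ℝ E] {f : ℝ → E} {k s : ℕ} {α β t : ℝ} (hf : ContDiffOn ℝ k f (Icc α β))
    (hs : s < k) (ht : t ∈ Ioo α β) :
    HasDerivAt (iteratedDerivWithin s f (Icc α β))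
      (iteratedDerivWithin (s + 1) f (Icc α β) t) t := by
  rw [iteratedDerivWithin_succ]
  exact ((hf.differentiableOn_iteratedDerivWithin (by exact_mod_cast hs)
    (uniqueDiffOn_Icc (ht.1.trans ht.2))) t (Ioo_subset_Icc_self ht)).hasDerivWithinAt.hasDerivAt
    (Icc_mem_nhds ht.1 ht.2)

theorem norm_sub_le_lipConstOn_mul {E : Type*} [NormedAddCommGroup E] {f : ℝ → E} {s : Set ℝ}
    (hf : ∃ C : ℝ, 0 ≤ C ∧ ∀ x ∈ s, ∀ y ∈ s, ‖f x - f y‖ ≤ C * |x - y|) {x y : ℝ} (hx : x ∈ s)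
    (hy : y ∈ s) : ‖f x - f y‖ ≤ lipConstOn f s * |x - y| := by
  rcases eq_or_ne x y with rfl | hxy
  · simp
  have hxy' : 0 < |x - y| := abs_pos.2 (sub_ne_zero.2 hxy)
  rw [← div_le_iff₀ hxy']
  exact le_csInf hf fun C hC => (div_le_iff₀ hxy').2 (hC.2 x hx y hy)

theorem lipConstOn_nonneg {E : Type*} [NormedAddCommGroup E] (f : ℝ → E) (s : Set ℝ) :
    0 ≤ lipConstOn f s :=
  Real.sInf_nonneg fun _ hC => hC.1

theorem CkLipOn.norm_iteratedDerivWithin_mul_pow_le {E : Type*} [NormedAddCommGroup E]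
    [NormedSpace ℝ E] {m : ℕ} {f : ℝ → E} {α β γ δ A : ℝ} (hf : CkLipOn m f (Icc α β))
    (hsub : Ioo γ δ ⊆ Ioo α β) (hA : ∀ u ∈ Ioo γ δ, ‖f u‖ ≤ A) {s : ℕ} (hs : s ≤ m) {t : ℝ}
    (ht : t ∈ Ioo γ δ) :
    ‖iteratedDerivWithin s f (Icc α β) t‖ * (δ - γ) ^ s ≤ (m + 1 : ℕ) * 6 ^ (m * m) * A +
      lipConstOn (iteratedDerivWithin m f (Icc α β)) (Ioo γ δ) * (δ - γ) ^ (m + 1) := by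
  obtain ⟨hcont, C, hC, hlip⟩ := hf
  have hsub' : Ioo γ δ ⊆ Icc α β := hsub.trans Ioo_subset_Icc_self
  exact norm_mul_pow_le_of_hasDerivAt_chain (F := fun i => iteratedDerivWithin i f (Icc α β))
    (lipConstOn_nonneg _ _)
    (fun i hi x hx => hcont.hasDerivAt_iteratedDerivWithin_Icc hi (hsub hx))
    (by simpa only [iteratedDerivWithin_zero] using hA)
    (fun x hx y hy => norm_sub_le_lipConstOn_mul
      ⟨C, hC, fun x hx y hy => hlip x (hsub' hx) y (hsub' hy)⟩ hx hy) hs ht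

theorem mul_pow_le_of_rpow_inv_mul_rpow_mul_le {L m h B : ℝ} {d e : ℕ} (hd : d ≠ 0) (hL : 0 ≤ L)
    (hm : 0 < m) (hh : 0 ≤ h) (H : L ^ (d : ℝ)⁻¹ * m ^ (((d : ℝ) - e) / d) * h ≤ B * m) :
    L * h ^ d ≤ B ^ d * m ^ e := by
  have hd' : (d : ℝ) ≠ 0 := by exact_mod_cast hd
  have hLd : (L ^ (d : ℝ)⁻¹) ^ d = L := by
    rw [← Real.rpow_natCast, ← Real.rpow_mul hL, inv_mul_cancel₀ hd', Real.rpow_one]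
  have hmd : m ^ d = (m ^ (((d : ℝ) - e) / d)) ^ d * m ^ e := by
    rw [← Real.rpow_natCast (m ^ _), ← Real.rpow_mul hm.le, div_mul_cancel₀ _ hd',
      ← Real.rpow_natCast m e, ← Real.rpow_add hm, sub_add_cancel, Real.rpow_natCast]
  have hpow := pow_le_pow_left₀ (by positivity) H d
  rw [mul_pow, mul_pow, mul_pow, hLd, hmd] at hpow
  have hM : 0 < (m ^ (((d : ℝ) - e) / d)) ^ d := by positivity
  nlinarith

theorem mul_le_and_le_of_iSup_mul_add_sum_le {ι : Type*} [Fintype ι] {f g : ι → ℝ} {h c : ℝ}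
    (hf : ∀ i, 0 ≤ f i) (hg : ∀ i, 0 ≤ g i) (hh : 0 ≤ h) (H : (⨆ i, f i) * h + ∑ i, g i ≤ c)
    (i : ι) : f i * h ≤ c ∧ g i ≤ c := by
  have hfi : f i ≤ ⨆ i, f i := le_ciSup (Set.finite_range f).bddAbove i
  have hgi : g i ≤ ∑ i, g i := Finset.single_le_sum (fun j _ => hg j) (Finset.mem_univ i)
  have hsum : 0 ≤ ∑ i, g i := Finset.sum_nonneg fun j _ => hg j
  constructor <;> nlinarith [hf i]

theorem le_mul_rpow_neg_mul_of_mul_pow_le {x C h P : ℝ} {s : ℕ} (hh : 0 < h)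
    (H : x * h ^ s ≤ C * P) : x ≤ C * h ^ (-(s : ℝ)) * P := by
  rw [Real.rpow_neg hh.le, Real.rpow_natCast, mul_right_comm, ← div_eq_mul_inv,
    le_div_iff₀ (by positivity)]
  exact H

def localSetupConst (d : ℕ) (B : ℝ) : ℝ :=
  (d + 1) * 6 ^ ((d - 1) * (d - 1)) * (1 + |B|) ^ d

theorem local_setup_estimates_component {d q : ℕ} (hq : q ≠ 0) (hqd : q ≤ d) {f g : ℝ → ℂ}
    {α β γ δ t₀ m B : ℝ} (hf : CkLipOn (d - 1) f (Icc α β)) (hg : ContinuousOn g (Ioo α β))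
    (hgf : ∀ t ∈ Ioo α β, g t ^ q = f t) (hint : IntegrableOn (deriv g) (Ioo α β))
    (ht₀ : t₀ ∈ Ioo γ δ) (hsub : Ioo γ δ ⊆ Ioo α β) (hm : 0 < m) (hgt₀ : ‖g t₀‖ ≤ m)
    (hLip : lipConstOn (iteratedDerivWithin (d - 1) f (Icc α β)) (Ioo γ δ) ^ (d : ℝ)⁻¹ *
      m ^ (((d : ℝ) - q) / d) * (δ - γ) ≤ B * m)
    (hvar : ∫ t in Ioo γ δ, ‖deriv g t‖ ≤ B * m) :
    (∀ s, 1 ≤ s → s ≤ d - 1 → ∀ t ∈ Ioo γ δ, ‖iteratedDerivWithin s f (Icc α β) t‖ ≤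
        localSetupConst d B * (δ - γ) ^ (-(s : ℝ)) * m ^ q) ∧
      lipConstOn (iteratedDerivWithin (d - 1) f (Icc α β)) (Ioo γ δ) ≤
        localSetupConst d B * (δ - γ) ^ (-(d : ℝ)) * m ^ q := by
  set Lip := lipConstOn (iteratedDerivWithin (d - 1) f (Icc α β)) (Ioo γ δ)
  have hh : 0 < δ - γ := by linarith [ht₀.1, ht₀.2]
  have hB : 0 ≤ B := by
    have : 0 ≤ ∫ t in Ioo γ δ, ‖deriv g t‖ := integral_nonneg fun _ => norm_nonneg _
    nlinarith
  have hd : 1 ≤ d := by omega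
  have hP : 0 ≤ (1 + B) ^ d * m ^ q := by positivity
  have hLipP : Lip * (δ - γ) ^ d ≤ 6 ^ ((d - 1) * (d - 1)) * ((1 + B) ^ d * m ^ q) :=
    calc Lip * (δ - γ) ^ d ≤ B ^ d * m ^ q :=
          mul_pow_le_of_rpow_inv_mul_rpow_mul_le (by omega) (lipConstOn_nonneg _ _) hm hh.le hLip
      _ ≤ (1 + B) ^ d * m ^ q := by gcongr; linarith
      _ ≤ _ := le_mul_of_one_le_left hP (one_le_pow₀ (by norm_num))
  refine ⟨fun s hs1 hs2 t ht => le_mul_rpow_neg_mul_of_mul_pow_le hh ?_,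
    le_mul_rpow_neg_mul_of_mul_pow_le hh ?_⟩
  · have hfP : ∀ u ∈ Ioo γ δ, ‖f u‖ ≤ (1 + B) ^ d * m ^ q := by
      intro u hu
      have hgu := norm_le_norm_add_setIntegral_deriv_of_pow_eq hq isOpen_Ioo ordConnected_Ioo
        (hg.mono hsub) (fun t ht => hgf t (hsub ht))
        (fun t ht => by simpa only [iteratedDerivWithin_zero] using
          (hf.1.hasDerivAt_iteratedDerivWithin_Icc (s := 0) (by omega) (hsub ht)).differentiableAt)
        (hint.mono_set hsub) ht₀ hu
      rw [← hgf u (hsub hu), norm_pow]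
      calc ‖g u‖ ^ q ≤ ((1 + B) * m) ^ q := by gcongr; linarith
        _ ≤ (1 + B) ^ d * m ^ q := by rw [mul_pow]; gcongr; linarith
    have hinterp := hf.norm_iteratedDerivWithin_mul_pow_le hsub hfP hs2 ht
    rw [Nat.sub_add_cancel hd] at hinterp
    calc _ ≤ _ := hinterp
      _ ≤ d * 6 ^ ((d - 1) * (d - 1)) * ((1 + B) ^ d * m ^ q) +
          6 ^ ((d - 1) * (d - 1)) * ((1 + B) ^ d * m ^ q) := by gcongr
      _ = _ := by rw [localSetupConst, abs_of_nonneg hB]; ring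
  · calc _ ≤ _ := hLipP
      _ ≤ ((d : ℝ) + 1) * (6 ^ ((d - 1) * (d - 1)) * ((1 + B) ^ d * m ^ q)) :=
          le_mul_of_one_le_left (by positivity) (by simp)
      _ = _ := by rw [localSetupConst, abs_of_nonneg hB]; ring

theorem local_setup_estimates_general
    (d : ℕ) (B : ℝ) :
    ∃ C : ℝ, 0 < C ∧
      ∀ (G : Type) (_ : Group G) (_ : Fintype G) (N n : ℕ)
        (ρ : Representation ℂ G (Fin N → ℂ))
        (σ : Fin n → MvPolynomial (Fin N) ℂ) (dd : Fin n → ℕ),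
        IsBasicInvariantSystem ρ σ →
        (∀ j, (σ j).IsHomogeneous (dd j)) →
        (∀ j, 1 ≤ dd j) →
        d = Finset.univ.sup dd →
        (∀ v : Fin N → ℂ, (∀ g : G, ρ g v = v) → v = 0) →
        ∀ α β : ℝ, α < β →
        ∀ a : ℝ → Fin n → ℂ,
          (∀ j, CkLipOn (d - 1) (fun t => a t j) (Set.Icc α β)) →
          (∀ t ∈ Set.Icc α β, a t ∈ Set.range (polyMap σ)) →
        ∀ ahat : Fin n → ℝ → ℂ,
          (∀ j, ∀ t ∈ Set.Ioo α β, ahat j t ^ dd j = a t j) →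
          (∀ j, ContinuousOn (ahat j) (Set.Ioo α β)) →
          (∀ j, AbsolutelyContinuousOn (ahat j) (Set.Ioo α β)) →
          (∀ j, IntegrableOn (deriv (ahat j)) (Set.Ioo α β)) →
        ∀ t₀ : ℝ, ∀ k : Fin n,
          (∀ j, ‖ahat j t₀‖ ≤ ‖ahat k t₀‖) → ahat k t₀ ≠ 0 →
        ∀ γ δ : ℝ, t₀ ∈ Set.Ioo γ δ → Set.Ioo γ δ ⊆ Set.Ioo α β →
          (⨆ j, (lipConstOn (iteratedDerivWithin (d - 1) (fun t => a t j) (Set.Icc α β))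
                (Set.Ioo γ δ)) ^ ((d : ℝ)⁻¹) *
              ‖ahat k t₀‖ ^ (((d : ℝ) - (dd j : ℝ)) / d)) * (δ - γ) +
            (∑ j, ∫ t in Set.Ioo γ δ, ‖deriv (ahat j) t‖) ≤ B * ‖ahat k t₀‖ →
          ∀ j, (∀ s : ℕ, 1 ≤ s → s ≤ d - 1 → ∀ t ∈ Set.Ioo γ δ,
              ‖iteratedDerivWithin s (fun u => a u j) (Set.Icc α β) t‖ ≤
                C * (δ - γ) ^ (-(s : ℝ)) * ‖ahat k t₀‖ ^ dd j) ∧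
            lipConstOn (iteratedDerivWithin (d - 1) (fun u => a u j) (Set.Icc α β))
                (Set.Ioo γ δ) ≤
              C * (δ - γ) ^ (-(d : ℝ)) * ‖ahat k t₀‖ ^ dd j := by
  refine ⟨localSetupConst d B, by unfold localSetupConst; positivity, ?_⟩
  intro G _ _ N n ρ σ dd _ _ hdd1 hdsup _ α β _ a ha _ ahat hpow hcont _ hint t₀ k hmax hk0 γ δ
    ht₀ hsub hineq j
  have hm : 0 < ‖ahat k t₀‖ := norm_pos_iff.2 hk0
  have hsplit := mul_le_and_le_of_iSup_mul_add_sum_le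
    (fun i => mul_nonneg (Real.rpow_nonneg (lipConstOn_nonneg _ _) _) (Real.rpow_nonneg hm.le _))
    (fun i => integral_nonneg fun _ => norm_nonneg _) (by linarith [ht₀.1, ht₀.2]) hineq
  exact local_setup_estimates_component (Nat.pos_iff_ne_zero.1 (hdd1 j))
    (hdsup ▸ Finset.le_sup (Finset.mem_univ j)) (ha j) (hcont j) (hpow j) (hint j) ht₀ hsub hm
    (hmax j) (hsplit j).1 (hsplit j).2

/-- **Step 1: the assumptions of the main theorem imply the local setup.**
Assume `V^G = {0}`.  Let `a ∈ C^{d-1,1}([α,β], ℂ^n)` with values in `σ(V)`, with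
absolutely continuous selections `â_j` of `a_j^{1/d_j}`, let `0 < B < 1/3`, let
`t₀, k` satisfy `|â_k(t₀)| = max_j |â_j(t₀)| ≠ 0`, and let `I = (γ,δ) ∋ t₀` be an open
subinterval of `(α,β)` such that `M|I| + Σ_j ‖â_j′‖_{L^1(I)} ≤ B |â_k(t₀)|`, where
`M = max_j Lip_I(a_j^{(d-1)})^{1/d} |â_k(t₀)|^{(d-d_j)/d}`.  Then there is a constant
`C` depending only on `d` (and `B`) such that for all `j` and `s = 1,…,d-1`:
`‖a_j^{(s)}‖_{L^∞(I)} ≤ C |I|^{-s} |â_k(t₀)|^{d_j}` and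
`Lip_I(a_j^{(d-1)}) ≤ C |I|^{-d} |â_k(t₀)|^{d_j}`. -/
theorem local_setup_estimates
    (d : ℕ) (hd : 1 ≤ d) (B : ℝ) (hB0 : 0 < B) (hB : B < 1 / 3) :
    ∃ C : ℝ, 0 < C ∧
      ∀ (G : Type) (_ : Group G) (_ : Fintype G) (N n : ℕ)
        (ρ : Representation ℂ G (Fin N → ℂ))
        (σ : Fin n → MvPolynomial (Fin N) ℂ) (dd : Fin n → ℕ),
        IsBasicInvariantSystem ρ σ →
        (∀ j, (σ j).IsHomogeneous (dd j)) →
        (∀ j, 1 ≤ dd j) →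
        d = Finset.univ.sup dd →
        (∀ v : Fin N → ℂ, (∀ g : G, ρ g v = v) → v = 0) →
        ∀ α β : ℝ, α < β →
        ∀ a : ℝ → Fin n → ℂ,
          (∀ j, CkLipOn (d - 1) (fun t => a t j) (Set.Icc α β)) →
          (∀ t ∈ Set.Icc α β, a t ∈ Set.range (polyMap σ)) →
        ∀ ahat : Fin n → ℝ → ℂ,
          (∀ j, ∀ t ∈ Set.Ioo α β, ahat j t ^ dd j = a t j) →
          (∀ j, ContinuousOn (ahat j) (Set.Ioo α β)) →
          (∀ j, AbsolutelyContinuousOn (ahat j) (Set.Ioo α β)) →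
          (∀ j, IntegrableOn (deriv (ahat j)) (Set.Ioo α β)) →
        ∀ t₀ : ℝ, ∀ k : Fin n,
          (∀ j, ‖ahat j t₀‖ ≤ ‖ahat k t₀‖) → ahat k t₀ ≠ 0 →
        ∀ γ δ : ℝ, t₀ ∈ Set.Ioo γ δ → Set.Ioo γ δ ⊆ Set.Ioo α β →
          (⨆ j, (lipConstOn (iteratedDerivWithin (d - 1) (fun t => a t j) (Set.Icc α β))
                (Set.Ioo γ δ)) ^ ((d : ℝ)⁻¹) *
              ‖ahat k t₀‖ ^ (((d : ℝ) - (dd j : ℝ)) / d)) * (δ - γ) +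
            (∑ j, ∫ t in Set.Ioo γ δ, ‖deriv (ahat j) t‖) ≤ B * ‖ahat k t₀‖ →
          ∀ j, (∀ s : ℕ, 1 ≤ s → s ≤ d - 1 → ∀ t ∈ Set.Ioo γ δ,
              ‖iteratedDerivWithin s (fun u => a u j) (Set.Icc α β) t‖ ≤
                C * (δ - γ) ^ (-(s : ℝ)) * ‖ahat k t₀‖ ^ dd j) ∧
            lipConstOn (iteratedDerivWithin (d - 1) (fun u => a u j) (Set.Icc α β))
                (Set.Ioo γ δ) ≤
              C * (δ - γ) ^ (-(d : ℝ)) * ‖ahat k t₀‖ ^ dd j :=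
  local_setup_estimates_general d B
end
end

section
/- Let G be a finite group and G ⟳ V a representation on a finite-dimensional complex vector space with homogeneous basic invariants σ = (σ_1,…,σ_n). Let I ⊆ ℝ be an interval, c : I → σ(V) ⊆ ℂ^n continuous, and let c̄ : J → V be a continuous lift of c over σ defined on an open subinterval J of I which is relatively compact in I (J ⋐ I). Then c̄ can be extended to a continuous lift of c defined on all of I. -/
open MeasureTheory Set
open scoped ENNReal NNReal

noncomputable section

/-!
Lift `c` globally to a continuous `cb` on `I`. Since the invariants separate orbits, on
`J = (γ, δ)` the given lift satisfies `cbar t ∈ G·cb t`. Near an endpoint `e` of `J` these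
orbits lie in small pairwise disjoint neighbourhoods of the finitely many points of `G·cb e`,
and connectedness of `J` keeps `cbar` inside a single one of them, so `cbar t → g·cb e` for
one `g`. Continuing `cbar` by `gγ·cb` to the left of `γ` and by `gδ·cb` to the right of `δ`
gives the extension.
-/

open Filter Topology

namespace MvPolynomial

def ofLinearForm {R ι : Type*} [CommSemiring R] [Fintype ι] [DecidableEq ι]
    (ℓ : Module.Dual R (ι → R)) : MvPolynomial ι R :=
  ∑ i, C (ℓ (Pi.single i 1)) * X i

@[simp]
theorem eval_ofLinearForm {R ι : Type*} [CommSemiring R] [Fintype ι] [DecidableEq ι]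
    (ℓ : Module.Dual R (ι → R)) (x : ι → R) : eval x (ofLinearForm ℓ) = ℓ x := by
  simp only [ofLinearForm, map_sum, map_mul, eval_C, eval_X, LinearMap.pi_apply_eq_sum_univ ℓ x,
    smul_eq_mul, mul_comm, ← Pi.single_apply, Pi.single_comm]

theorem eval_eq_of_mem_adjoin {R σ ι : Type*} [CommRing R] {f : ι → MvPolynomial σ R}
    {q : MvPolynomial σ R} (hq : q ∈ Algebra.adjoin R (range f)) {v w : σ → R}
    (hvw : ∀ j, eval v (f j) = eval w (f j)) : eval v q = eval w q := by
  have hle : Algebra.adjoin R (range f) ≤ AlgHom.equalizer (aeval v) (aeval w) := by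
    rw [Algebra.adjoin_le_iff]
    rintro _ ⟨j, rfl⟩
    simpa [aeval_eq_eval] using hvw j
  simpa [aeval_eq_eval] using hle hq

end MvPolynomial

open MvPolynomial in
theorem exists_invariant_eval_eq_zero_ne_zero {G K : Type*} [Group G] [Fintype G] [Field K]
    [Infinite K] {N : ℕ} (ρ : Representation K G (Fin N → K)) {v w : Fin N → K}
    (hvw : ∀ g, w ≠ ρ g v) :
    ∃ q : MvPolynomial (Fin N) K, (∀ g x, eval (ρ g x) q = eval x q) ∧
      eval v q = 0 ∧ eval w q ≠ 0 := by
  have hne : ∀ g, ρ g w - v ≠ 0 := fun g h => by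
    refine hvw g⁻¹ ?_
    rw [← sub_eq_zero.1 h, ← Module.End.mul_apply, ← map_mul, inv_mul_cancel, map_one,
      Module.End.one_apply]
  obtain ⟨ℓ, hℓ⟩ := Module.exists_dual_forall_apply_ne_zero (K := K) _ hne
  -- the norm over `G` of an affine form vanishing at `v` but nowhere on the orbit of `w`
  set q : MvPolynomial (Fin N) K := ∏ g, (ofLinearForm (ℓ ∘ₗ ρ g) - C (ℓ v))
  have heval : ∀ x, eval x q = ∏ g, (ℓ (ρ g x) - ℓ v) := by simp [q]
  refine ⟨q, fun h x => ?_, ?_, ?_⟩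
  · simp only [heval, ← Module.End.mul_apply, ← map_mul]
    exact Fintype.prod_equiv (Equiv.mulRight h) _ _ fun g => rfl
  · rw [heval]
    exact Finset.prod_eq_zero (Finset.mem_univ 1) (by simp)
  · simpa [heval, Finset.prod_ne_zero_iff] using hℓ

namespace IsBasicInvariantSystem

variable {G : Type*} [Group G] {N n : ℕ} {ρ : Representation ℂ G (Fin N → ℂ)}
  {σ : Fin n → MvPolynomial (Fin N) ℂ}

theorem polyMap_apply (hσ : IsBasicInvariantSystem ρ σ) (g : G) (v : Fin N → ℂ) :
    polyMap σ (ρ g v) = polyMap σ v :=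
  funext fun j => hσ.1 j g v

theorem exists_eq_apply_of_polyMap_eq [Fintype G] (hσ : IsBasicInvariantSystem ρ σ)
    {v w : Fin N → ℂ} (hvw : polyMap σ v = polyMap σ w) : ∃ g, w = ρ g v := by
  by_contra! hw
  obtain ⟨q, hq, hv, hw⟩ := exists_invariant_eval_eq_zero_ne_zero ρ hw
  exact hw (hv ▸ (MvPolynomial.eval_eq_of_mem_adjoin (hσ.2 q hq) (congrFun hvw)).symm)

end IsBasicInvariantSystem

theorem IsPreconnected.subset_of_pairwiseDisjoint {X ι : Type*} [TopologicalSpace X] {t : Set X}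
    (ht : IsPreconnected t) {S : Set ι} {U : ι → Set X} (hU : ∀ i, IsOpen (U i))
    (hdisj : S.PairwiseDisjoint U) (hcover : t ⊆ ⋃ i ∈ S, U i) {i : ι} (hi : i ∈ S)
    (hti : (t ∩ U i).Nonempty) : t ⊆ U i := by
  refine ht.subset_left_of_subset_union (v := ⋃ j ∈ S \ {i}, U j) (hU i)
    (isOpen_biUnion fun j _ => hU j) ?_ ?_ hti
  · exact disjoint_iUnion₂_right.2 fun j hj => hdisj hi hj.1 (Ne.symm hj.2)
  · intro x hx
    obtain ⟨j, hj, hxj⟩ := mem_iUnion₂.1 (hcover hx)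
    by_cases hji : j = i
    · exact Or.inl (hji ▸ hxj)
    · exact Or.inr (mem_iUnion₂.2 ⟨j, ⟨hj, hji⟩, hxj⟩)

theorem exists_tendsto_of_forall_exists_eq {ι X : Type*} [Finite ι] [TopologicalSpace X]
    [T2Space X] {s : Set ℝ} (hs : s.OrdConnected) {e : ℝ} (he : e ∈ closure s) {f : ℝ → X}
    (hf : ContinuousOn f s) {φ : ι → ℝ → X} {a : ι → X}
    (hφ : ∀ i, Tendsto (φ i) (𝓝[s] e) (𝓝 (a i))) (hfφ : ∀ t ∈ s, ∃ i, f t = φ i t) :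
    ∃ i, Tendsto f (𝓝[s] e) (𝓝 (a i)) := by
  have : (𝓝[s] e).NeBot := mem_closure_iff_nhdsWithin_neBot.1 he
  obtain ⟨U, hU, hdisj⟩ := (finite_range a).t2_separation
  have hnear : ∀ᶠ t in 𝓝[s] e, ∀ i, φ i t ∈ U (a i) :=
    eventually_all.2 fun i => hφ i ((hU (a i)).2.mem_nhds (hU (a i)).1)
  obtain ⟨η, hη, hball⟩ := Metric.nhdsWithin_basis_ball.mem_iff.1 hnear
  set P := Metric.ball e η ∩ s
  have hP : P ∈ 𝓝[s] e := Metric.nhdsWithin_basis_ball.mem_of_mem hη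
  have hPconn : IsPreconnected (f '' P) := by
    refine IsPreconnected.image ?_ f (hf.mono inter_subset_right)
    simp only [P, Real.ball_eq_Ioo]
    exact (ordConnected_Ioo.inter hs).isPreconnected
  have hPU : f '' P ⊆ ⋃ x ∈ range a, U x := by
    rintro _ ⟨t, ht, rfl⟩
    obtain ⟨i, hi⟩ := hfφ t ht.2
    exact mem_iUnion₂.2 ⟨a i, mem_range_self i, hi ▸ hball ht i⟩
  obtain ⟨t₀, ht₀⟩ := Filter.nonempty_of_mem hP
  obtain ⟨i₀, hi₀⟩ := hfφ t₀ ht₀.2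
  have hsub : f '' P ⊆ U (a i₀) := hPconn.subset_of_pairwiseDisjoint (fun x => (hU x).2) hdisj
    hPU (mem_range_self i₀) ⟨f t₀, mem_image_of_mem f ht₀, hi₀ ▸ hball ht₀ i₀⟩
  refine ⟨i₀, fun W hW => mem_map.2 ?_⟩
  have hφW : ∀ᶠ t in 𝓝[s] e, ∀ i : {i // a i = a i₀}, φ i t ∈ W :=
    eventually_all.2 fun i => hφ i (by rwa [i.2])
  filter_upwards [hP, hφW] with t htP htW
  obtain ⟨i, hi⟩ := hfφ t htP.2
  have hai : a i = a i₀ := by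
    by_contra hne
    exact (hdisj (mem_range_self i) (mem_range_self i₀) hne).ne_of_mem (hi ▸ hball htP i)
      (hsub (mem_image_of_mem f htP)) rfl
  exact show f t ∈ W from hi ▸ htW ⟨i, hai⟩

theorem ContinuousOn.if_of_isOpen {α β : Type*} [TopologicalSpace α] [TopologicalSpace β]
    {p : α → Prop} [DecidablePred p] {s : Set α} {f g : α → β} (hp : IsOpen {a | p a})
    (hf : ContinuousOn f (s ∩ {a | p a})) (hg : ContinuousOn g s)
    (hfg : ∀ a ∈ s ∩ frontier {a | p a}, Tendsto f (𝓝[s ∩ {a | p a}] a) (𝓝 (g a))) :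
    ContinuousOn (fun a => if p a then f a else g a) s := by
  have hnp : ∀ a ∈ frontier {a | p a}, ¬p a := fun a ha => (hp.frontier_eq ▸ ha).2
  refine ContinuousOn.if' (fun a ha => ?_) (fun a ha => ?_) hf (hg.mono inter_subset_left)
  · rw [if_neg (hnp a ha.2)]
    exact hfg a ha
  · rw [if_neg (hnp a ha.2)]
    exact (hg a ha.1).mono inter_subset_left

theorem ContinuousOn.if_Ioo {X : Type*} [TopologicalSpace X] {s : Set ℝ} {γ δ : ℝ} (hγδ : γ < δ)
    {f l r : ℝ → X} (hf : ContinuousOn f (Ioo γ δ)) (hl : ContinuousOn l s)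
    (hr : ContinuousOn r s) (hγ : Tendsto f (𝓝[>] γ) (𝓝 (l γ)))
    (hδ : Tendsto f (𝓝[<] δ) (𝓝 (r δ))) :
    ContinuousOn (fun t => if γ < t then if t < δ then f t else r t else l t) s := by
  have hinner : ContinuousOn (fun t => if t < δ then f t else r t) (s ∩ Ioi γ) := by
    refine ContinuousOn.if_of_isOpen isOpen_Iio ?_ (hr.mono inter_subset_left) ?_
    · exact hf.mono fun t ht => ⟨ht.1.2, ht.2⟩
    · rintro a ⟨-, ha : a ∈ frontier (Iio δ)⟩
      rw [frontier_Iio, mem_singleton_iff] at ha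
      subst ha
      exact hδ.mono_left (nhdsWithin_mono _ inter_subset_right)
  refine ContinuousOn.if_of_isOpen isOpen_Ioi hinner hl ?_
  rintro a ⟨-, ha : a ∈ frontier (Ioi γ)⟩
  rw [frontier_Ioi, mem_singleton_iff] at ha
  subst ha
  refine (hγ.congr' ?_).mono_left (nhdsWithin_mono _ inter_subset_right)
  filter_upwards [Ioo_mem_nhdsGT hγδ] with t ht
  rw [if_pos ht.2]

theorem extension_of_continuous_lift_general
    {G : Type} [Group G] [Fintype G] {N n : ℕ}
    (ρ : Representation ℂ G (Fin N → ℂ))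
    (σ : Fin n → MvPolynomial (Fin N) ℂ)
    (hbasic : IsBasicInvariantSystem ρ σ)
    (I : Set ℝ)
    (hliftable : ∀ c' : ℝ → Fin n → ℂ, ContinuousOn c' I →
      (∀ t ∈ I, c' t ∈ Set.range (polyMap σ)) →
      ∃ cb : ℝ → Fin N → ℂ, ContinuousOn cb I ∧ ∀ t ∈ I, polyMap σ (cb t) = c' t)
    (c : ℝ → Fin n → ℂ)
    (hc : ContinuousOn c I)
    (hcval : ∀ t ∈ I, c t ∈ Set.range (polyMap σ))
    (γ δ : ℝ) (hγδ : γ < δ) (hJI : Set.Icc γ δ ⊆ I)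
    (cbar : ℝ → Fin N → ℂ)
    (hcbar : ContinuousOn cbar (Set.Ioo γ δ))
    (hcbarlift : ∀ t ∈ Set.Ioo γ δ, polyMap σ (cbar t) = c t) :
    ∃ cext : ℝ → Fin N → ℂ,
      ContinuousOn cext I ∧
      (∀ t ∈ I, polyMap σ (cext t) = c t) ∧
      ∀ t ∈ Set.Ioo γ δ, cext t = cbar t := by
  obtain ⟨cb, hcb, hcblift⟩ := hliftable c hc hcval
  have hρcb : ∀ g, ContinuousOn (fun t => ρ g (cb t)) I := fun g =>
    (LinearMap.continuous_of_finiteDimensional (ρ g)).comp_continuousOn hcb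
  have horbit : ∀ t ∈ Ioo γ δ, ∃ g, cbar t = ρ g (cb t) := fun t ht =>
    hbasic.exists_eq_apply_of_polyMap_eq <| by
      rw [hcblift t (hJI (Ioo_subset_Icc_self ht)), hcbarlift t ht]
  have hlim : ∀ e ∈ Icc γ δ, ∃ g, Tendsto cbar (𝓝[Ioo γ δ] e) (𝓝 (ρ g (cb e))) := fun e he =>
    exists_tendsto_of_forall_exists_eq ordConnected_Ioo (by rwa [closure_Ioo hγδ.ne]) hcbar
      (fun g => (hρcb g e (hJI he)).mono (Ioo_subset_Icc_self.trans hJI)) horbit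
  obtain ⟨gγ, hγ⟩ := hlim γ (left_mem_Icc.2 hγδ.le)
  obtain ⟨gδ, hδ⟩ := hlim δ (right_mem_Icc.2 hγδ.le)
  rw [nhdsWithin_Ioo_eq_nhdsGT hγδ] at hγ
  rw [nhdsWithin_Ioo_eq_nhdsLT hγδ] at hδ
  refine ⟨fun t => if γ < t then if t < δ then cbar t else ρ gδ (cb t) else ρ gγ (cb t),
    hcbar.if_Ioo hγδ (hρcb gγ) (hρcb gδ) hγ hδ, fun t ht => ?_,
    fun t ht => by simp [ht.1, ht.2]⟩
  dsimp only
  split_ifs with h₁ h₂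
  · exact hcbarlift t ⟨h₁, h₂⟩
  all_goals rw [hbasic.polyMap_apply, hcblift t ht]

/-- **Extension of continuous lifts.**
Let `c : I → σ(V)` be continuous on an interval `I ⊆ ℝ` and let `c̄` be a continuous
lift of `c` over `σ` defined on an open subinterval `J = (γ,δ)` relatively compact in
`I` (`[γ,δ] ⊆ I`).  Then `c̄` extends to a continuous lift of `c` defined on all of `I`.
(As in the paper, the existence of continuous lifts of continuous curves in `σ(V)` may
be assumed.) -/
theorem extension_of_continuous_lift
    {G : Type} [Group G] [Fintype G] {N n : ℕ}
    (ρ : Representation ℂ G (Fin N → ℂ))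
    (σ : Fin n → MvPolynomial (Fin N) ℂ)
    (dd : Fin n → ℕ)
    (hbasic : IsBasicInvariantSystem ρ σ)
    (hhom : ∀ j, (σ j).IsHomogeneous (dd j))
    (I : Set ℝ) (hI : I.OrdConnected)
    (hliftable : ∀ c' : ℝ → Fin n → ℂ, ContinuousOn c' I →
      (∀ t ∈ I, c' t ∈ Set.range (polyMap σ)) →
      ∃ cb : ℝ → Fin N → ℂ, ContinuousOn cb I ∧ ∀ t ∈ I, polyMap σ (cb t) = c' t)
    (c : ℝ → Fin n → ℂ)
    (hc : ContinuousOn c I)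
    (hcval : ∀ t ∈ I, c t ∈ Set.range (polyMap σ))
    (γ δ : ℝ) (hγδ : γ < δ) (hJI : Set.Icc γ δ ⊆ I)
    (cbar : ℝ → Fin N → ℂ)
    (hcbar : ContinuousOn cbar (Set.Ioo γ δ))
    (hcbarlift : ∀ t ∈ Set.Ioo γ δ, polyMap σ (cbar t) = c t) :
    ∃ cext : ℝ → Fin N → ℂ,
      ContinuousOn cext I ∧
      (∀ t ∈ I, polyMap σ (cext t) = c t) ∧
      ∀ t ∈ Set.Ioo γ δ, cext t = cbar t :=
  extension_of_continuous_lift_general ρ σ hbasic I hliftable c hc hcval γ δ hγδ hJI cbar hcbar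
    hcbarlift
end
end
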